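/- Let P be a double histogram and let s, t ∈ V(P) be vertices with t ∈ I(s) ∖ N(s). Then nd(s,t) and fd(s,t) are co-visible (as points of P). -/

import Mathlib

open Classical Set

noncomputable section

/-- A *double histogram*: an `x`-monotone orthogonal polygon in general position whose
base line lies on the `x`-axis.  It is described by its bottom columns (over the
breakpoints `xs` with depths `d < 0`) and its top columns (over the breakpoints `ys`
with heights `h > 0`).  A *simple histogram* is the special case `n = 1`, where the
upper boundary is the single (base) edge at height `h 0`. -/
structure DoubleHistogram where
  m : ℕ
  n : ℕ
  hm : 0 < m
  hn : 0 < n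
  xs : Fin (m + 1) → ℝ
  ys : Fin (n + 1) → ℝ
  d : Fin m → ℝ
  h : Fin n → ℝ
  xs_mono : StrictMono xs
  ys_mono : StrictMono ys
  left_eq : ys 0 = xs 0
  right_eq : ys (Fin.last n) = xs (Fin.last m)
  d_neg : ∀ i, d i < 0
  h_pos : ∀ j, 0 < h j
  /-- general position: no three vertices on a horizontal line -/
  d_inj : Function.Injective d
  h_inj : Function.Injective h
  /-- general position: no three vertices on a vertical line -/
  gen_pos : ∀ (i : Fin (m + 1)) (j : Fin (n + 1)), xs i = ys j →
      (i = 0 ∧ j = 0) ∨ (i = Fin.last m ∧ j = Fin.last n)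

/-- Among the reals in `A`, the one of minimum absolute value
(i.e. "closest to the base line"). -/
def closestToBase (A : Set ℝ) : ℝ :=
  sSup {y | y ∈ A ∧ ∀ y' ∈ A, |y| ≤ |y'|}

/-- The leftmost point of `S` among those minimizing the distance `|y|` to the base line. -/
def leftmostLowest (S : Set (ℝ × ℝ)) : ℝ × ℝ :=
  (sInf {x | ∃ y, (x, y) ∈ S ∧ ∀ q ∈ S, |y| ≤ |q.2|},
    closestToBase {y | (sInf {x | ∃ y', (x, y') ∈ S ∧ ∀ q ∈ S, |y'| ≤ |q.2|}, y) ∈ S})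

namespace DoubleHistogram

variable (H : DoubleHistogram)

/-- The polygon `P`, as a closed region of the plane. -/
def region : Set (ℝ × ℝ) :=
  (⋃ i : Fin H.m, Icc (H.xs i.castSucc) (H.xs i.succ) ×ˢ Icc (H.d i) 0) ∪
    ⋃ j : Fin H.n, Icc (H.ys j.castSucc) (H.ys j.succ) ×ˢ Icc 0 (H.h j)

/-- The vertex set `V(P)`. -/
def verts : Set (ℝ × ℝ) :=
  (⋃ i : Fin H.m,
      ({(H.xs i.castSucc, H.d i), (H.xs i.succ, H.d i)} : Set (ℝ × ℝ))) ∪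
    ⋃ j : Fin H.n,
      ({(H.ys j.castSucc, H.h j), (H.ys j.succ, H.h j)} : Set (ℝ × ℝ))

/-- `p` and `q` are co-visible: the axis-parallel rectangle they span lies in `P`. -/
def covisible (p q : ℝ × ℝ) : Prop :=
  Icc (min p.1 q.1) (max p.1 q.1) ×ˢ Icc (min p.2 q.2) (max p.2 q.2) ⊆ H.region

lemma covisible_symm {p q : ℝ × ℝ} (hpq : H.covisible p q) : H.covisible q p := by
  unfold covisible at hpq ⊢
  rwa [min_comm q.1 p.1, max_comm q.1 p.1, min_comm q.2 p.2, max_comm q.2 p.2]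

/-- The (unweighted) visibility graph `G(P)` on the vertices of `P`. -/
def visGraph : SimpleGraph ↥H.verts where
  Adj u v := u ≠ v ∧ H.covisible ↑u ↑v
  symm := ⟨fun _ _ hu => ⟨hu.1.symm, H.covisible_symm hu.2⟩⟩
  loopless := ⟨fun _ hu => hu.1 rfl⟩

/-- The closed neighborhood `N(v)`: `v` together with the vertices it sees. -/
def Nbr (v : ℝ × ℝ) : Set (ℝ × ℝ) :=
  {w | w ∈ H.verts ∧ (w = v ∨ H.covisible v w)}

/-- The abscissa where the leftward horizontal ray from `v` hits the boundary of `P`. -/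
def lhit (v : ℝ × ℝ) : ℝ :=
  sInf {x | x ≤ v.1 ∧ Icc x v.1 ×ˢ ({v.2} : Set ℝ) ⊆ H.region}

/-- The abscissa where the rightward horizontal ray from `v` hits the boundary of `P`. -/
def rhit (v : ℝ × ℝ) : ℝ :=
  sSup {x | v.1 ≤ x ∧ Icc v.1 x ×ˢ ({v.2} : Set ℝ) ⊆ H.region}

/-- The `y`-coordinate, among the vertices of `P` with abscissa `x` lying on the same side
of the base line as `side`, of the one closest to the base line (i.e. the endpoint of the
vertical edge at `x` closer to the base line). -/
def nearY (x : ℝ) (side : ℝ) : ℝ :=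
  if side < 0 then sSup {y | y < 0 ∧ (x, y) ∈ H.verts}
  else sInf {y | 0 < y ∧ (x, y) ∈ H.verts}

/-- The left point `ℓ(v)` (double-histogram version): if the leftward ray from `v` hits the
left boundary then the hit point, otherwise the endpoint of the hit vertical edge closer to
the base line. -/
def lpt (v : ℝ × ℝ) : ℝ × ℝ :=
  if H.lhit v = H.xs 0 then (H.xs 0, v.2) else (H.lhit v, H.nearY (H.lhit v) v.2)

/-- The right point `r(v)` (double-histogram version). -/
def rpt (v : ℝ × ℝ) : ℝ × ℝ :=
  if H.rhit v = H.xs (Fin.last H.m) then (H.xs (Fin.last H.m), v.2)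
  else (H.rhit v, H.nearY (H.rhit v) v.2)

/-- The left base vertex (for a simple histogram, i.e. `n = 1`). -/
def baseL : ℝ × ℝ := (H.xs 0, H.h ⟨0, H.hn⟩)

/-- The right base vertex (for a simple histogram, i.e. `n = 1`). -/
def baseR : ℝ × ℝ := (H.xs (Fin.last H.m), H.h ⟨0, H.hn⟩)

/-- The left point `ℓ(v)` (simple-histogram version): if the leftward ray from `v` hits the
left boundary then the left base vertex, otherwise the endpoint of the hit vertical edge
closer to the base edge. -/
def lptS (v : ℝ × ℝ) : ℝ × ℝ :=
  if H.lhit v = H.xs 0 then H.baseL else (H.lhit v, H.nearY (H.lhit v) v.2)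

/-- The right point `r(v)` (simple-histogram version). -/
def rptS (v : ℝ × ℝ) : ℝ × ℝ :=
  if H.rhit v = H.xs (Fin.last H.m) then H.baseR
  else (H.rhit v, H.nearY (H.rhit v) v.2)

/-- The interval `[p, q]`: all vertices of `P` between `p` and `q`. -/
def ivl (p q : ℝ × ℝ) : Set (ℝ × ℝ) :=
  {u | u ∈ H.verts ∧ p.1 ≤ u.1 ∧ u.1 ≤ q.1}

/-- The interval `I(v) = [ℓ(v), r(v)]` of a vertex (double-histogram version). -/
def Iv (v : ℝ × ℝ) : Set (ℝ × ℝ) := H.ivl (H.lpt v) (H.rpt v)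

/-- The interval `I(v) = [ℓ(v), r(v)]` of a vertex (simple-histogram version). -/
def IvS (v : ℝ × ℝ) : Set (ℝ × ℝ) := H.ivl (H.lptS v) (H.rptS v)

/-- The corresponding vertex `cv(v)`: the unique other vertex sharing a horizontal edge
(equivalently, by general position, the `y`-coordinate) with `v`. -/
def cv (v : ℝ × ℝ) : ℝ × ℝ :=
  (sSup {x | (x, v.2) ∈ H.verts ∧ x ≠ v.1}, v.2)

/-- `v` is a left vertex: the left endpoint of its horizontal edge. -/
def IsLeftVert (v : ℝ × ℝ) : Prop :=
  (∃ i : Fin H.m, v = (H.xs i.castSucc, H.d i)) ∨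
    ∃ j : Fin H.n, v = (H.ys j.castSucc, H.h j)

/-- `v` is a right vertex: the right endpoint of its horizontal edge. -/
def IsRightVert (v : ℝ × ℝ) : Prop :=
  (∃ i : Fin H.m, v = (H.xs i.succ, H.d i)) ∨
    ∃ j : Fin H.n, v = (H.ys j.succ, H.h j)

/-- `v` is an `ℓ`-reflex vertex (a left vertex with interior angle `3π/2`). -/
def IsLReflex (v : ℝ × ℝ) : Prop :=
  (∃ i : Fin H.m, ∃ _ : 0 < (i : ℕ),
      v = (H.xs i.castSucc, H.d i) ∧
        H.d ⟨(i : ℕ) - 1, lt_of_le_of_lt (Nat.sub_le _ _) i.isLt⟩ < H.d i) ∨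
    ∃ j : Fin H.n, ∃ _ : 0 < (j : ℕ),
      v = (H.ys j.castSucc, H.h j) ∧
        H.h j < H.h ⟨(j : ℕ) - 1, lt_of_le_of_lt (Nat.sub_le _ _) j.isLt⟩

/-- `v` is an `r`-reflex vertex (a right vertex with interior angle `3π/2`). -/
def IsRReflex (v : ℝ × ℝ) : Prop :=
  (∃ i : Fin H.m, ∃ hi : (i : ℕ) + 1 < H.m,
      v = (H.xs i.succ, H.d i) ∧ H.d ⟨(i : ℕ) + 1, hi⟩ < H.d i) ∨
    ∃ j : Fin H.n, ∃ hj : (j : ℕ) + 1 < H.n,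
      v = (H.ys j.succ, H.h j) ∧ H.h j < H.h ⟨(j : ℕ) + 1, hj⟩

/-- `v` is a reflex vertex. -/
def IsReflex (v : ℝ × ℝ) : Prop := H.IsLReflex v ∨ H.IsRReflex v

/-- The near dominator `nd(s,t)`: for `t` strictly right of `s`, the rightmost vertex of
`N(s)` to the left of `t`, ties broken towards the base line (symmetric otherwise). -/
def nd (s t : ℝ × ℝ) : ℝ × ℝ :=
  if s.1 < t.1 then
    let nx := sSup {x | (∃ y, (x, y) ∈ H.Nbr s) ∧ x ≤ t.1}
    (nx, closestToBase {y | (nx, y) ∈ H.Nbr s})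
  else
    let nx := sInf {x | (∃ y, (x, y) ∈ H.Nbr s) ∧ t.1 ≤ x}
    (nx, closestToBase {y | (nx, y) ∈ H.Nbr s})

/-- The far dominator `fd(s,t)`: for `t` strictly right of `s`, the leftmost vertex of
`N(s)` to the right of `t`, ties broken towards the base line; if there is no such vertex,
the point `r(s)` (symmetric otherwise). -/
def fd (s t : ℝ × ℝ) : ℝ × ℝ :=
  if s.1 < t.1 then
    if ∃ w ∈ H.Nbr s, t.1 ≤ w.1 then
      let nx := sInf {x | (∃ y, (x, y) ∈ H.Nbr s) ∧ t.1 ≤ x}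
      (nx, closestToBase {y | (nx, y) ∈ H.Nbr s})
    else H.rpt s
  else
    if ∃ w ∈ H.Nbr s, w.1 ≤ t.1 then
      let nx := sSup {x | (∃ y, (x, y) ∈ H.Nbr s) ∧ x ≤ t.1}
      (nx, closestToBase {y | (nx, y) ∈ H.Nbr s})
    else H.lpt s

/-- The sequence `a^i(s)`: `a^0(s) = s`, and `a^i(s)` is the leftmost vertex of
`A^i(s) = {v ∈ N(s) : ℓ(v)_x < ℓ(a^{i-1}(s))_x}` (ties towards the base line),
or `a^{i-1}(s)` if `A^i(s)` is empty. -/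
def aSeq (s : ℝ × ℝ) : ℕ → ℝ × ℝ := fun k =>
  Nat.rec (motive := fun _ => ℝ × ℝ) s
    (fun _ prev =>
      let A : Set (ℝ × ℝ) := {v | v ∈ H.Nbr s ∧ (H.lpt v).1 < (H.lpt prev).1}
      if A = ∅ then prev
      else
        let ax := sInf {x | ∃ y, (x, y) ∈ A}
        (ax, closestToBase {y | (ax, y) ∈ A}))
    k

/-- The sequence `b^i(s)`: `b^0(s) = s`, and `b^i(s)` is the rightmost vertex of
`B^i(s) = {v ∈ N(s) : r(v)_x > r(b^{i-1}(s))_x}` (ties towards the base line),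
or `b^{i-1}(s)` if `B^i(s)` is empty. -/
def bSeq (s : ℝ × ℝ) : ℕ → ℝ × ℝ := fun k =>
  Nat.rec (motive := fun _ => ℝ × ℝ) s
    (fun _ prev =>
      let B : Set (ℝ × ℝ) := {v | v ∈ H.Nbr s ∧ (H.rpt prev).1 < (H.rpt v).1}
      if B = ∅ then prev
      else
        let bx := sSup {x | ∃ y, (x, y) ∈ B}
        (bx, closestToBase {y | (bx, y) ∈ B}))
    k

/-- The pair of the `k`-th bottom dominator `bd^k(s)` and `k`-th top dominator `td^k(s)`:
`bd^0(s) = td^0(s) = s`; for `k > 0`, with `I^k(s) = I(bd^{k-1}(s)) ∪ I(td^{k-1}(s))`,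
`bd^k(s)` is the leftmost vertex of `I^k(s)⁻` minimizing the distance to the base line,
and `td^k(s)` the leftmost vertex of `I^k(s)⁺` minimizing the distance to the base line;
if one of the two sets is empty, the corresponding dominator equals the other one. -/
def bdtd (s : ℝ × ℝ) : ℕ → (ℝ × ℝ) × (ℝ × ℝ) := fun k =>
  Nat.rec (motive := fun _ => (ℝ × ℝ) × (ℝ × ℝ)) (s, s)
    (fun _ p =>
      let J : Set (ℝ × ℝ) := H.Iv p.1 ∪ H.Iv p.2
      let Jm : Set (ℝ × ℝ) := {v | v ∈ J ∧ v.2 < 0}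
      let Jp : Set (ℝ × ℝ) := {v | v ∈ J ∧ 0 < v.2}
      if Jm = ∅ then (leftmostLowest Jp, leftmostLowest Jp)
      else if Jp = ∅ then (leftmostLowest Jm, leftmostLowest Jm)
      else (leftmostLowest Jm, leftmostLowest Jp))
    k

/-- The `k`-th interval `I^k(s)`: `I^0(s) = {s}` and
`I^{k+1}(s) = I(bd^k(s)) ∪ I(td^k(s))`. -/
def Ipow (s : ℝ × ℝ) : ℕ → Set (ℝ × ℝ) := fun k =>
  Nat.rec (motive := fun _ => Set (ℝ × ℝ)) {s}
    (fun k _ => H.Iv (H.bdtd s k).1 ∪ H.Iv (H.bdtd s k).2) k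

/-- `w` lies on a shortest path from `s` to `t` in the visibility graph. -/
def OnShortestPath (s t w : ↥H.verts) : Prop :=
  ∃ p : H.visGraph.Walk s t, p.length = H.visGraph.dist s t ∧ w ∈ p.support

end DoubleHistogram

/-- A routing scheme for a graph `G`: every vertex carries a binary label and a binary
routing table, and the routing function maps (link table of the current vertex, routing
table of the current vertex, label of the target, current header) to the next vertex
together with the new header. -/
structure RoutingScheme {V : Type} (G : SimpleGraph V) where
  lab : V → List Bool
  tab : V → List Bool
  route : Set (List Bool) → List Bool → List Bool → List Bool → V × List Bool

namespace RoutingScheme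

variable {V : Type} {G : SimpleGraph V} (R : RoutingScheme G)

/-- One routing step at vertex `p` with header `h`, towards the target `t`: the routing
function is applied to the link table of `p` (the labels of its closed neighborhood),
the routing table of `p`, the label of `t` and the header `h`. -/
def step (t p : V) (h : List Bool) : V × List Bool :=
  R.route (R.lab '' {w | w = p ∨ G.Adj p w}) (R.tab p) (R.lab t) h

/-- The routing sequence from `s` towards `t`, starting with the empty header. -/
def seq (s t : V) : ℕ → V × List Bool := fun k =>
  Nat.rec (motive := fun _ => V × List Bool) (s, ([] : List Bool))
    (fun _ q => R.step t q.1 q.2) k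

end RoutingScheme


structure VProf where
  N : ℕ
  hN : 0 < N
  b : Fin (N + 1) → ℝ
  ht : Fin N → ℝ
  mono : StrictMono b
  pos : ∀ j, 0 < ht j

namespace VProf

variable {P : VProf}

def col (P : VProf) (j : Fin P.N) : Set ℝ := Icc (P.b j.castSucc) (P.b j.succ)

def cond (P : VProf) (x y : ℝ) : Prop := ∃ j, x ∈ P.col j ∧ max y 0 ≤ P.ht j

def pv (P : VProf) : Set (ℝ × ℝ) :=
  ⋃ j, ({(P.b j.castSucc, P.ht j), (P.b j.succ, P.ht j)} : Set (ℝ × ℝ))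

lemma pv_finite (P : VProf) : P.pv.Finite :=
  Set.finite_iUnion (fun _ => (Set.finite_singleton _).insert _)

lemma pv_left (k : Fin P.N) : (P.b k.castSucc, P.ht k) ∈ P.pv :=
  mem_iUnion.mpr ⟨k, by simp⟩

lemma pv_right (k : Fin P.N) : (P.b k.succ, P.ht k) ∈ P.pv :=
  mem_iUnion.mpr ⟨k, by simp⟩

lemma col_subset {j : Fin P.N} : P.col j ⊆ Icc (P.b 0) (P.b (Fin.last P.N)) := by
  intro x hx
  exact ⟨le_trans (P.mono.monotone (Fin.zero_le _)) hx.1,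
    le_trans hx.2 (P.mono.monotone (Fin.le_last _))⟩

lemma cond_le {x y y' : ℝ} (h : max y' 0 ≤ max y 0) (hc : P.cond x y) : P.cond x y' := by
  obtain ⟨j, hj, hy⟩ := hc; exact ⟨j, hj, le_trans h hy⟩

lemma cond_range {x y : ℝ} (hc : P.cond x y) : x ∈ Icc (P.b 0) (P.b (Fin.last P.N)) := by
  obtain ⟨j, hj, _⟩ := hc; exact col_subset hj

lemma tile' : ∀ (q p : Fin (P.N + 1)), p < q → ∀ x ∈ Icc (P.b p) (P.b q),
    ∃ j : Fin P.N, p ≤ j.castSucc ∧ j.succ ≤ q ∧ x ∈ P.col j := by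
  intro q
  induction q using Fin.induction with
  | zero => exact fun p hp => absurd hp (Fin.not_lt_zero p)
  | succ i ih =>
    intro p hp x hx
    rcases le_or_gt (P.b i.castSucc) x with hge | hlt
    · exact ⟨i, Fin.le_castSucc_iff.mpr hp, le_refl _, hge, hx.2⟩
    · have hpi : p < i.castSucc := (P.mono.lt_iff_lt).mp (lt_of_le_of_lt hx.1 hlt)
      obtain ⟨j, h1, h2, h3⟩ := ih p hpi x ⟨hx.1, le_of_lt hlt⟩
      exact ⟨j, h1, le_trans h2 (Fin.castSucc_le_succ i), h3⟩

lemma tile {x : ℝ} (hx : x ∈ Icc (P.b 0) (P.b (Fin.last P.N))) : ∃ j, x ∈ P.col j := by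
  have h0 : (0 : Fin (P.N + 1)) < Fin.last P.N := by
    rw [Fin.lt_iff_val_lt_val]; simpa using P.hN
  obtain ⟨j, _, _, hj⟩ := tile' (Fin.last P.N) 0 h0 x hx
  exact ⟨j, hj⟩

lemma tileHalf {x : ℝ} (h0 : P.b 0 ≤ x) (hl : x < P.b (Fin.last P.N)) :
    ∃ j : Fin P.N, P.b j.castSucc ≤ x ∧ x < P.b j.succ := by
  obtain ⟨j, hj⟩ := tile ⟨h0, hl.le⟩
  rcases lt_or_ge x (P.b j.succ) with h | h
  · exact ⟨j, hj.1, h⟩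
  · have hxe : x = P.b j.succ := le_antisymm hj.2 h
    have hjlt : j.succ < Fin.last P.N := by
      rw [← P.mono.lt_iff_lt, ← hxe]; exact hl
    have hvlt : (j.val + 1) < P.N := by
      have := Fin.lt_iff_val_lt_val.mp hjlt; simpa using this
    refine ⟨⟨j.val + 1, hvlt⟩, ?_, ?_⟩
    · have he : (⟨j.val + 1, hvlt⟩ : Fin P.N).castSucc = j.succ := by
        ext; simp
      rw [he, ← hxe]
    · rw [hxe]
      apply P.mono
      rw [Fin.lt_iff_val_lt_val]; simp

lemma cond_closed (c : ℝ) : IsClosed {x | P.cond x c} := by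
  have he : {x | P.cond x c} = ⋃ j ∈ {j : Fin P.N | max c 0 ≤ P.ht j}, P.col j := by
    ext x
    simp only [mem_setOf_eq, mem_iUnion, exists_prop, cond]
    constructor
    · rintro ⟨j, hj, hy⟩; exact ⟨j, hy, hj⟩
    · rintro ⟨j, hy, hj⟩; exact ⟨j, hj, hy⟩
  rw [he]
  exact Set.Finite.isClosed_biUnion (Set.toFinite _) (fun j _ => isClosed_Icc)

lemma stair {y₀ u xst : ℝ} {j₀ : Fin P.N} (hy₀ : 0 < y₀)
    (hu : u ∈ P.col j₀) (hj₀ : y₀ ≤ P.ht j₀) (hux : u ≤ xst)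
    (hxb : xst ≤ P.b (Fin.last P.N)) (hfail : ¬ P.cond xst y₀) :
    ∃ k : Fin P.N, u ≤ P.b k.castSucc ∧ P.b k.castSucc < xst ∧ P.ht k < y₀ ∧
      ∀ x ∈ Icc u (P.b k.castSucc), P.cond x y₀ := by
  have hmax : max y₀ 0 = y₀ := max_eq_left hy₀.le
  have hx0 : P.b 0 ≤ xst := le_trans (le_trans (P.mono.monotone (Fin.zero_le _)) hu.1) hux
  obtain ⟨jst, hjst⟩ := tile ⟨hx0, hxb⟩
  have hall : ∀ j : Fin P.N, xst ∈ P.col j → P.ht j < y₀ := by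
    intro j hj
    by_contra hc
    exact hfail ⟨j, hj, hmax.le.trans (not_lt.mp hc)⟩
  have hj0st : j₀ < jst := by
    have hnotin : xst ∉ P.col j₀ := fun hmem => absurd hj₀ (not_le.mpr (hall _ hmem))
    have h1 : P.b j₀.succ < xst := by
      rcases lt_or_ge (P.b j₀.succ) xst with h | h
      · exact h
      · exact absurd ⟨le_trans hu.1 hux, h⟩ hnotin
    have h2 : P.b j₀.succ < P.b jst.succ := lt_of_lt_of_le h1 hjst.2
    exact Fin.succ_lt_succ_iff.mp (P.mono.lt_iff_lt.mp h2)
  obtain ⟨k, hkS, hkmin⟩ := Set.exists_min_image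
    {j : Fin P.N | j₀ < j ∧ j ≤ jst ∧ P.ht j < y₀} id (Set.toFinite _)
    ⟨jst, hj0st, le_refl _, hall _ hjst⟩
  obtain ⟨hk1, hk2, hk3⟩ := hkS
  have hmin' : ∀ j : Fin P.N, j₀ ≤ j → j < k → y₀ ≤ P.ht j := by
    intro j h1 h2
    rcases eq_or_lt_of_le h1 with rfl | h1
    · exact hj₀
    · by_contra hc
      exact absurd (hkmin j ⟨h1, le_trans h2.le hk2, not_le.mp hc⟩) (not_le.mpr h2)
  refine ⟨k, le_trans hu.2 (P.mono.monotone (Fin.succ_le_castSucc_iff.mpr hk1)), ?_, hk3, ?_⟩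
  · have hle : P.b k.castSucc ≤ xst :=
      le_trans (P.mono.monotone (Fin.castSucc_le_castSucc_iff.mpr hk2)) hjst.1
    rcases eq_or_lt_of_le hle with heq | h
    · exfalso
      have hkv : (j₀ : ℕ) < (k : ℕ) := Fin.lt_iff_val_lt_val.mp hk1
      have hkpos : 0 < (k : ℕ) := by omega
      set j' : Fin P.N := ⟨(k : ℕ) - 1, lt_of_le_of_lt (Nat.sub_le _ _) k.isLt⟩ with hj'def
      have hsucc : j'.succ = k.castSucc := by
        apply Fin.ext
        simp only [Fin.val_succ, Fin.coe_castSucc, hj'def]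
        omega
      have hcol : xst ∈ P.col j' := by
        refine ⟨?_, ?_⟩
        · calc P.b j'.castSucc ≤ P.b j'.succ := P.mono.monotone (Fin.castSucc_le_succ j')
            _ = P.b k.castSucc := by rw [hsucc]
            _ = xst := heq
        · rw [hsucc, heq]
      have hj'k : j' < k := by
        rw [Fin.lt_iff_val_lt_val]; simp only [hj'def]; omega
      have hj0j' : j₀ ≤ j' := by
        rw [Fin.le_iff_val_le_val]; simp only [hj'def]; omega
      exact absurd (hmin' j' hj0j' hj'k) (not_le.mpr (hall j' hcol))
    · exact h
  · intro x hx
    have hx' : x ∈ Icc (P.b j₀.castSucc) (P.b k.castSucc) := ⟨le_trans hu.1 hx.1, hx.2⟩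
    obtain ⟨j, hj1, hj2, hj3⟩ := tile' k.castSucc j₀.castSucc
      (Fin.castSucc_lt_castSucc_iff.mpr hk1) x hx'
    exact ⟨j, hj3, hmax.le.trans (hmin' j (Fin.castSucc_le_castSucc_iff.mp hj1)
      (Fin.succ_le_castSucc_iff.mp hj2))⟩

lemma block_mem {a c : ℝ} (ha : P.cond a c) :
    a ∈ {x | a ≤ x ∧ ∀ x' ∈ Icc a x, P.cond x' c} :=
  ⟨le_refl a, fun x' hx' => by
    rw [show x' = a from le_antisymm hx'.2 hx'.1]; exact ha⟩

lemma block_bdd {a c : ℝ} : BddAbove {x | a ≤ x ∧ ∀ x' ∈ Icc a x, P.cond x' c} := by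
  refine ⟨P.b (Fin.last P.N), fun x hx => ?_⟩
  exact (cond_range (hx.2 x ⟨hx.1, le_refl x⟩)).2

lemma block_seg {a c : ℝ} (ha : P.cond a c) :
    a ≤ sSup {x | a ≤ x ∧ ∀ x' ∈ Icc a x, P.cond x' c} ∧
    sSup {x | a ≤ x ∧ ∀ x' ∈ Icc a x, P.cond x' c} ≤ P.b (Fin.last P.N) ∧
    ∀ x ∈ Icc a (sSup {x | a ≤ x ∧ ∀ x' ∈ Icc a x, P.cond x' c}), P.cond x c := by
  set R := {x | a ≤ x ∧ ∀ x' ∈ Icc a x, P.cond x' c} with hR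
  have hne : R.Nonempty := ⟨a, block_mem ha⟩
  have h1 : a ≤ sSup R := le_csSup block_bdd (block_mem ha)
  have h2 : sSup R ≤ P.b (Fin.last P.N) :=
    csSup_le hne (fun x hx => (cond_range (hx.2 x ⟨hx.1, le_refl x⟩)).2)
  refine ⟨h1, h2, ?_⟩
  have hIco : Ico a (sSup R) ⊆ {x | P.cond x c} := by
    intro x hx
    obtain ⟨ρ, hρR, hρx⟩ := exists_lt_of_lt_csSup hne hx.2
    exact hρR.2 x ⟨hx.1, hρx.le⟩
  intro x hx
  rcases eq_or_lt_of_le h1 with heq | hlt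
  · rw [show x = a from le_antisymm (heq ▸ hx.2) hx.1]; exact ha
  · have hsub : Icc a (sSup R) ⊆ {x | P.cond x c} := by
      rw [← closure_Ico (ne_of_lt hlt)]
      exact (cond_closed c).closure_subset_iff.mpr hIco
    exact hsub hx

lemma block_vertex {a c : ℝ} (hc : 0 < c) (ha : P.cond a c)
    (hlt : sSup {x | a ≤ x ∧ ∀ x' ∈ Icc a x, P.cond x' c} < P.b (Fin.last P.N)) :
    ∃ k : Fin P.N,
      sSup {x | a ≤ x ∧ ∀ x' ∈ Icc a x, P.cond x' c} = P.b k.castSucc ∧ P.ht k < c := by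
  obtain ⟨h1, h2, h3⟩ := block_seg ha
  set r := sSup {x | a ≤ x ∧ ∀ x' ∈ Icc a x, P.cond x' c} with hr
  have hrc : P.cond r c := h3 r ⟨h1, le_refl r⟩
  have hr0 : P.b 0 ≤ r := le_trans (cond_range ha).1 h1
  obtain ⟨j, hj1, hj2⟩ := tileHalf hr0 hlt
  have hhtj : P.ht j < c := by
    by_contra hcge
    have hmem : P.b j.succ ∈ {x | a ≤ x ∧ ∀ x' ∈ Icc a x, P.cond x' c} := by
      refine ⟨le_trans h1 (le_of_lt hj2), fun x' hx' => ?_⟩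
      rcases le_or_gt x' r with h | h
      · exact h3 x' ⟨hx'.1, h⟩
      · exact ⟨j, ⟨le_trans hj1 h.le, hx'.2⟩,
          (max_eq_left hc.le).le.trans (not_lt.mp hcge)⟩
    exact absurd (le_csSup block_bdd hmem) (not_le.mpr hj2)
  obtain ⟨j', hj', hcj'⟩ := hrc
  have hne : j' ≠ j := by
    intro h
    rw [h, max_eq_left hc.le] at hcj'
    exact absurd hcj' (not_le.mpr hhtj)
  have heq : r = P.b j.castSucc := by
    rcases lt_or_ge j' j with h | h
    · have h5 : P.b j'.succ ≤ P.b j.castSucc :=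
        P.mono.monotone (Fin.succ_le_castSucc_iff.mpr h)
      exact le_antisymm (le_trans hj'.2 h5) hj1
    · have hlt' : j < j' := lt_of_le_of_ne h (Ne.symm hne)
      have h5 : P.b j.succ ≤ P.b j'.castSucc :=
        P.mono.monotone (Fin.succ_le_castSucc_iff.mpr hlt')
      exact absurd (lt_of_lt_of_le hj2 (le_trans h5 hj'.1)) (lt_irrefl r)
  exact ⟨j, heq, hhtj⟩

@[reducible] def flip (P : VProf) : VProf where
  N := P.N
  hN := P.hN
  b := fun i => -P.b i.rev
  ht := fun j => P.ht j.rev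
  mono := fun i i' h => by
    simp only [neg_lt_neg_iff]
    exact P.mono (Fin.rev_lt_rev.mpr h)
  pos := fun j => P.pos _

lemma flip_col {j : Fin P.N} : P.flip.col j = {x | -x ∈ P.col j.rev} := by
  ext x
  show x ∈ Icc (P.flip.b j.castSucc) (P.flip.b j.succ) ↔ _
  have e1 : P.flip.b j.castSucc = -P.b j.rev.succ := by
    show -P.b (j.castSucc).rev = _; rw [Fin.rev_castSucc]
  have e2 : P.flip.b j.succ = -P.b j.rev.castSucc := by
    show -P.b (j.succ).rev = _; rw [Fin.rev_succ]
  rw [e1, e2]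
  simp only [mem_Icc, mem_setOf_eq, col]
  constructor
  · rintro ⟨u1, u2⟩; exact ⟨by linarith, by linarith⟩
  · rintro ⟨u1, u2⟩; exact ⟨by linarith, by linarith⟩

lemma flip_ht {j : Fin P.N} : P.flip.ht j = P.ht j.rev := rfl

lemma flip_cond {x y : ℝ} : P.flip.cond x y ↔ P.cond (-x) y := by
  constructor
  · rintro ⟨j, hj, hy⟩
    rw [flip_col] at hj
    exact ⟨j.rev, hj, hy⟩
  · rintro ⟨j, hj, hy⟩
    refine ⟨j.rev, ?_, ?_⟩
    · rw [flip_col, Fin.rev_rev]; exact hj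
    · rw [flip_ht, Fin.rev_rev]; exact hy

lemma flip_b_last : P.flip.b (Fin.last P.flip.N) = -P.b 0 := by
  show -P.b (Fin.last P.N).rev = _
  rw [Fin.rev_last]

lemma flip_b_zero : P.flip.b 0 = -P.b (Fin.last P.N) := by
  show -P.b (0 : Fin (P.N + 1)).rev = _
  rw [Fin.rev_zero]

lemma stairR {y₀ u xst : ℝ} {j₀ : Fin P.N} (hy₀ : 0 < y₀)
    (hu : u ∈ P.col j₀) (hj₀ : y₀ ≤ P.ht j₀) (hux : xst ≤ u)
    (hxb : P.b 0 ≤ xst) (hfail : ¬ P.cond xst y₀) :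
    ∃ k : Fin P.N, P.b k.succ ≤ u ∧ xst < P.b k.succ ∧ P.ht k < y₀ ∧
      ∀ x ∈ Icc (P.b k.succ) u, P.cond x y₀ := by
  have hu' : -u ∈ P.flip.col j₀.rev := by
    rw [flip_col, Fin.rev_rev]; simpa using hu
  have hj₀' : y₀ ≤ P.flip.ht j₀.rev := by rw [flip_ht, Fin.rev_rev]; exact hj₀
  have hfail' : ¬ P.flip.cond (-xst) y₀ := by
    rw [flip_cond, neg_neg]; exact hfail
  have hxb' : -xst ≤ P.flip.b (Fin.last P.flip.N) := by
    rw [flip_b_last]; linarith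
  obtain ⟨k', h1, h2, h3, h4⟩ :=
    stair (P := P.flip) hy₀ hu' hj₀' (neg_le_neg hux) hxb' hfail'
  have ebk : P.flip.b k'.castSucc = -P.b k'.rev.succ := by
    show -P.b (k'.castSucc).rev = _; rw [Fin.rev_castSucc]
  rw [ebk] at h1 h2 h4
  refine ⟨k'.rev, by linarith, by linarith, h3, ?_⟩
  intro x hx
  have : P.flip.cond (-x) y₀ := h4 (-x) ⟨by linarith [hx.2], by linarith [hx.1]⟩
  rwa [flip_cond, neg_neg] at this

lemma blockR_set {a c : ℝ} :
    {x | x ≤ a ∧ ∀ x' ∈ Icc x a, P.cond x' c} =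
      -{x | -a ≤ x ∧ ∀ x' ∈ Icc (-a) x, P.flip.cond x' c} := by
  ext x
  simp only [mem_neg, mem_setOf_eq]
  constructor
  · rintro ⟨h1, h2⟩
    refine ⟨by linarith, fun x' hx' => ?_⟩
    rw [flip_cond]
    exact h2 (-x') ⟨by linarith [hx'.2], by linarith [hx'.1]⟩
  · rintro ⟨h1, h2⟩
    refine ⟨by linarith, fun x' hx' => ?_⟩
    have := h2 (-x') ⟨by linarith [hx'.2], by linarith [hx'.1]⟩
    rwa [flip_cond, neg_neg] at this

lemma sInf_eq_neg_sSup (L : Set ℝ) : sInf L = -sSup (-L) := Real.sInf_def L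

lemma blockR_seg {a c : ℝ} (ha : P.cond a c) :
    sInf {x | x ≤ a ∧ ∀ x' ∈ Icc x a, P.cond x' c} ≤ a ∧
    P.b 0 ≤ sInf {x | x ≤ a ∧ ∀ x' ∈ Icc x a, P.cond x' c} ∧
    ∀ x ∈ Icc (sInf {x | x ≤ a ∧ ∀ x' ∈ Icc x a, P.cond x' c}) a, P.cond x c := by
  have ha' : P.flip.cond (-a) c := by rw [flip_cond, neg_neg]; exact ha
  obtain ⟨h1, h2, h3⟩ := block_seg (P := P.flip) ha'
  have hset : sInf {x | x ≤ a ∧ ∀ x' ∈ Icc x a, P.cond x' c} =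
      -sSup {x | -a ≤ x ∧ ∀ x' ∈ Icc (-a) x, P.flip.cond x' c} := by
    rw [blockR_set (P := P) (a := a) (c := c), sInf_eq_neg_sSup, neg_neg]
  rw [hset]
  rw [flip_b_last] at h2
  refine ⟨by linarith, by linarith, ?_⟩
  intro x hx
  have := h3 (-x) ⟨by linarith [hx.2], by linarith [hx.1]⟩
  rwa [flip_cond, neg_neg] at this

lemma blockR_vertex {a c : ℝ} (hc : 0 < c) (ha : P.cond a c)
    (hgt : P.b 0 < sInf {x | x ≤ a ∧ ∀ x' ∈ Icc x a, P.cond x' c}) :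
    ∃ k : Fin P.N,
      sInf {x | x ≤ a ∧ ∀ x' ∈ Icc x a, P.cond x' c} = P.b k.succ ∧ P.ht k < c := by
  have ha' : P.flip.cond (-a) c := by rw [flip_cond, neg_neg]; exact ha
  have hset : sInf {x | x ≤ a ∧ ∀ x' ∈ Icc x a, P.cond x' c} =
      -sSup {x | -a ≤ x ∧ ∀ x' ∈ Icc (-a) x, P.flip.cond x' c} := by
    rw [blockR_set (P := P) (a := a) (c := c), sInf_eq_neg_sSup, neg_neg]
  have hlt : sSup {x | -a ≤ x ∧ ∀ x' ∈ Icc (-a) x, P.flip.cond x' c} <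
      P.flip.b (Fin.last P.flip.N) := by
    rw [flip_b_last]
    rw [hset] at hgt
    linarith
  obtain ⟨k', hk1, hk2⟩ := block_vertex (P := P.flip) hc ha' hlt
  have ebk : P.flip.b k'.castSucc = -P.b k'.rev.succ := by
    show -P.b (k'.castSucc).rev = _; rw [Fin.rev_castSucc]
  refine ⟨k'.rev, ?_, hk2⟩
  rw [hset, hk1, ebk, neg_neg]

end VProf
namespace DoubleHistogram

variable {H : DoubleHistogram}

@[reducible] def Ptop (H : DoubleHistogram) : VProf := ⟨H.n, H.hn, H.ys, H.h, H.ys_mono, H.h_pos⟩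

@[reducible] def Pbot (H : DoubleHistogram) : VProf :=
  ⟨H.m, H.hm, H.xs, fun i => -H.d i, H.xs_mono, fun i => by simpa using (H.d_neg i)⟩

lemma Ptop_b0 : H.Ptop.b 0 = H.xs 0 := H.left_eq
lemma Ptop_blast : H.Ptop.b (Fin.last H.Ptop.N) = H.xs (Fin.last H.m) := H.right_eq
lemma Pbot_b0 : H.Pbot.b 0 = H.xs 0 := rfl
lemma Pbot_blast : H.Pbot.b (Fin.last H.Pbot.N) = H.xs (Fin.last H.m) := rfl

lemma top_range_eq : Icc (H.Ptop.b 0) (H.Ptop.b (Fin.last H.Ptop.N)) =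
    Icc (H.xs 0) (H.xs (Fin.last H.m)) := by rw [Ptop_b0, Ptop_blast]

lemma mem_region_iff {p : ℝ × ℝ} :
    p ∈ H.region ↔ H.Ptop.cond p.1 p.2 ∧ H.Pbot.cond p.1 (-p.2) := by
  constructor
  · intro hp
    rcases hp with hp | hp
    · rw [mem_iUnion] at hp
      obtain ⟨i, hi⟩ := hp
      rw [mem_prod] at hi
      have hxr : p.1 ∈ Icc (H.Ptop.b 0) (H.Ptop.b (Fin.last H.Ptop.N)) := by
        rw [top_range_eq]
        exact VProf.col_subset (P := H.Pbot) hi.1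
      obtain ⟨j, hj⟩ := VProf.tile hxr
      refine ⟨⟨j, hj, ?_⟩, ⟨i, hi.1, ?_⟩⟩
      · rw [max_eq_right hi.2.2]
        exact (H.h_pos j).le
      · show max (-p.2) 0 ≤ -H.d i
        refine max_le (by linarith [hi.2.1]) (by linarith [H.d_neg i])
    · rw [mem_iUnion] at hp
      obtain ⟨j, hj⟩ := hp
      rw [mem_prod] at hj
      have hxr : p.1 ∈ Icc (H.Pbot.b 0) (H.Pbot.b (Fin.last H.Pbot.N)) := by
        rw [Pbot_b0, Pbot_blast, ← top_range_eq]
        exact VProf.col_subset (P := H.Ptop) hj.1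
      obtain ⟨i, hi⟩ := VProf.tile hxr
      refine ⟨⟨j, hj.1, ?_⟩, ⟨i, hi, ?_⟩⟩
      · rw [max_eq_left hj.2.1]
        exact hj.2.2
      · show max (-p.2) 0 ≤ -H.d i
        refine max_le (by linarith [hj.2.1, H.d_neg i]) (by linarith [H.d_neg i])
  · rintro ⟨⟨j, hj, hyt⟩, ⟨i, hi, hyb⟩⟩
    rcases le_total 0 p.2 with h0 | h0
    · right
      rw [mem_iUnion]
      refine ⟨j, mem_prod.mpr ⟨hj, h0, ?_⟩⟩
      calc p.2 ≤ max p.2 0 := le_max_left _ _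
        _ ≤ H.h j := hyt
    · left
      rw [mem_iUnion]
      refine ⟨i, mem_prod.mpr ⟨hi, ?_, h0⟩⟩
      have : -p.2 ≤ -H.d i := le_trans (le_max_left _ 0) hyb
      linarith

lemma covisible_iff {p q : ℝ × ℝ} :
    H.covisible p q ↔ ∀ x ∈ Icc (min p.1 q.1) (max p.1 q.1),
      H.Ptop.cond x (max p.2 q.2) ∧ H.Pbot.cond x (max (-p.2) (-q.2)) := by
  unfold covisible
  constructor
  · intro hc x hx
    have h1 : ((x, max p.2 q.2) : ℝ × ℝ) ∈ H.region :=
      hc (mk_mem_prod hx ⟨min_le_max, le_refl _⟩)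
    have h2 : ((x, min p.2 q.2) : ℝ × ℝ) ∈ H.region :=
      hc (mk_mem_prod hx ⟨le_refl _, min_le_max⟩)
    refine ⟨(mem_region_iff.mp h1).1, ?_⟩
    have := (mem_region_iff.mp h2).2
    rwa [max_neg_neg]
  · intro hc z hz
    rw [mem_prod] at hz
    obtain ⟨hct, hcb⟩ := hc z.1 hz.1
    rw [show z = (z.1, z.2) from rfl, mem_region_iff]
    constructor
    · exact VProf.cond_le (max_le_max hz.2.2 (le_refl 0)) hct
    · refine VProf.cond_le (max_le_max ?_ (le_refl 0)) hcb
      rw [max_neg_neg]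
      exact neg_le_neg hz.2.1

lemma mem_verts_top {v : ℝ × ℝ} (hv : v ∈ H.verts) (h2 : 0 < v.2) :
    ∃ j : Fin H.n, v.1 ∈ H.Ptop.col j ∧ v.2 = H.h j := by
  rcases hv with hv | hv <;> rw [mem_iUnion] at hv
  · obtain ⟨i, hi⟩ := hv
    simp only [mem_insert_iff, mem_singleton_iff] at hi
    rcases hi with rfl | rfl <;>
      exact absurd h2 (not_lt.mpr (H.d_neg i).le)
  · obtain ⟨j, hj⟩ := hv
    simp only [mem_insert_iff, mem_singleton_iff] at hj
    rcases hj with rfl | rfl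
    · exact ⟨j, ⟨le_refl _, H.ys_mono.monotone (Fin.castSucc_le_succ j)⟩, rfl⟩
    · exact ⟨j, ⟨H.ys_mono.monotone (Fin.castSucc_le_succ j), le_refl _⟩, rfl⟩

lemma mem_verts_bot {v : ℝ × ℝ} (hv : v ∈ H.verts) (h2 : v.2 < 0) :
    ∃ i : Fin H.m, v.1 ∈ H.Pbot.col i ∧ v.2 = H.d i := by
  rcases hv with hv | hv <;> rw [mem_iUnion] at hv
  · obtain ⟨i, hi⟩ := hv
    simp only [mem_insert_iff, mem_singleton_iff] at hi
    rcases hi with rfl | rfl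
    · exact ⟨i, ⟨le_refl _, H.xs_mono.monotone (Fin.castSucc_le_succ i)⟩, rfl⟩
    · exact ⟨i, ⟨H.xs_mono.monotone (Fin.castSucc_le_succ i), le_refl _⟩, rfl⟩
  · obtain ⟨j, hj⟩ := hv
    simp only [mem_insert_iff, mem_singleton_iff] at hj
    rcases hj with rfl | rfl <;>
      exact absurd h2 (not_lt.mpr (H.h_pos j).le)

lemma verts_y_ne {v : ℝ × ℝ} (hv : v ∈ H.verts) : v.2 ≠ 0 := by
  rcases hv with hv | hv <;> rw [mem_iUnion] at hv
  · obtain ⟨i, hi⟩ := hv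
    simp only [mem_insert_iff, mem_singleton_iff] at hi
    rcases hi with rfl | rfl <;> exact (H.d_neg i).ne
  · obtain ⟨j, hj⟩ := hv
    simp only [mem_insert_iff, mem_singleton_iff] at hj
    rcases hj with rfl | rfl <;> exact (H.h_pos j).ne'

lemma verts_subset_region : H.verts ⊆ H.region := by
  intro v hv
  rcases hv with hv | hv <;> rw [mem_iUnion] at hv
  · obtain ⟨i, hi⟩ := hv
    simp only [mem_insert_iff, mem_singleton_iff] at hi
    rcases hi with rfl | rfl
    · exact Or.inl (mem_iUnion.mpr ⟨i, mk_mem_prod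
        ⟨le_refl _, H.xs_mono.monotone (Fin.castSucc_le_succ i)⟩ ⟨le_refl _, (H.d_neg i).le⟩⟩)
    · exact Or.inl (mem_iUnion.mpr ⟨i, mk_mem_prod
        ⟨H.xs_mono.monotone (Fin.castSucc_le_succ i), le_refl _⟩ ⟨le_refl _, (H.d_neg i).le⟩⟩)
  · obtain ⟨j, hj⟩ := hv
    simp only [mem_insert_iff, mem_singleton_iff] at hj
    rcases hj with rfl | rfl
    · exact Or.inr (mem_iUnion.mpr ⟨j, mk_mem_prod
        ⟨le_refl _, H.ys_mono.monotone (Fin.castSucc_le_succ j)⟩ ⟨(H.h_pos j).le, le_refl _⟩⟩)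
    · exact Or.inr (mem_iUnion.mpr ⟨j, mk_mem_prod
        ⟨H.ys_mono.monotone (Fin.castSucc_le_succ j), le_refl _⟩ ⟨(H.h_pos j).le, le_refl _⟩⟩)

lemma verts_finite : H.verts.Finite :=
  (Set.finite_iUnion fun _ => (Set.finite_singleton _).insert _).union
    (Set.finite_iUnion fun _ => (Set.finite_singleton _).insert _)

lemma verts_x_range {v : ℝ × ℝ} (hv : v ∈ H.verts) :
    v.1 ∈ Icc (H.xs 0) (H.xs (Fin.last H.m)) := by
  have := (mem_region_iff.mp (verts_subset_region hv)).2
  exact VProf.cond_range this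

lemma closestToBase_spec {A : Set ℝ} (hf : A.Finite) (hne : A.Nonempty) :
    closestToBase A ∈ A ∧ ∀ y ∈ A, |closestToBase A| ≤ |y| := by
  obtain ⟨a, ha, hmin⟩ := Set.exists_min_image A (fun y => |y|) hf hne
  have hMne : {y | y ∈ A ∧ ∀ y' ∈ A, |y| ≤ |y'|}.Nonempty := ⟨a, ha, hmin⟩
  have hMf : {y | y ∈ A ∧ ∀ y' ∈ A, |y| ≤ |y'|}.Finite := hf.subset (fun y hy => hy.1)
  have hmem : closestToBase A ∈ {y | y ∈ A ∧ ∀ y' ∈ A, |y| ≤ |y'|} := hMne.csSup_mem hMf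
  exact ⟨hmem.1, hmem.2⟩

lemma Nbr_subset_verts {s : ℝ × ℝ} : H.Nbr s ⊆ H.verts := fun _ hw => hw.1

lemma self_mem_Nbr {s : ℝ × ℝ} (hs : s ∈ H.verts) : s ∈ H.Nbr s := ⟨hs, Or.inl rfl⟩

lemma Nbr_finite (s : ℝ × ℝ) : (H.Nbr s).Finite := verts_finite.subset Nbr_subset_verts

lemma covisible_of_mem_Nbr {s w : ℝ × ℝ} (hw : w ∈ H.Nbr s) (hne : w ≠ s) :
    H.covisible s w := by
  rcases hw.2 with h | h
  · exact absurd h hne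
  · exact h

lemma region_closed : IsClosed H.region :=
  ((isClosed_iUnion_of_finite fun _ => (isClosed_Icc.prod isClosed_Icc)).union
    (isClosed_iUnion_of_finite fun _ => (isClosed_Icc.prod isClosed_Icc)))

lemma rhit_spec {s : ℝ × ℝ} (hs : s ∈ H.region) :
    s.1 ≤ H.rhit s ∧ H.rhit s ≤ H.xs (Fin.last H.m) ∧
      ∀ x ∈ Icc s.1 (H.rhit s), ((x, s.2) : ℝ × ℝ) ∈ H.region := by
  set R := {x | s.1 ≤ x ∧ Icc s.1 x ×ˢ ({s.2} : Set ℝ) ⊆ H.region} with hR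
  have hmem : s.1 ∈ R := by
    refine ⟨le_refl _, fun z hz => ?_⟩
    rw [mem_prod] at hz
    have h1 : z.1 = s.1 := le_antisymm hz.1.2 hz.1.1
    have h2 : z.2 = s.2 := hz.2
    rw [show z = (z.1, z.2) from rfl, h1, h2, Prod.mk.eta]
    exact hs
  have hkey : ∀ x ∈ R, x ≤ H.xs (Fin.last H.m) := by
    intro x hx
    have : ((x, s.2) : ℝ × ℝ) ∈ H.region := hx.2 (mk_mem_prod ⟨hx.1, le_refl x⟩ rfl)
    exact (VProf.cond_range (mem_region_iff.mp this).2).2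
  have hbdd : BddAbove R := ⟨H.xs (Fin.last H.m), hkey⟩
  have h1 : s.1 ≤ H.rhit s := le_csSup hbdd hmem
  have h2 : H.rhit s ≤ H.xs (Fin.last H.m) := csSup_le ⟨s.1, hmem⟩ hkey
  refine ⟨h1, h2, ?_⟩
  have hclosed : IsClosed {x | ((x, s.2) : ℝ × ℝ) ∈ H.region} :=
    region_closed.preimage (Continuous.prodMk continuous_id continuous_const)
  have hIco : Ico s.1 (H.rhit s) ⊆ {x | ((x, s.2) : ℝ × ℝ) ∈ H.region} := by
    intro x hx
    obtain ⟨ρ, hρR, hρx⟩ := exists_lt_of_lt_csSup ⟨s.1, hmem⟩ hx.2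
    exact hρR.2 (mk_mem_prod ⟨hx.1, hρx.le⟩ rfl)
  intro x hx
  rcases eq_or_lt_of_le h1 with heq | hlt
  · have : x = s.1 := le_antisymm (heq ▸ hx.2) hx.1
    rw [this, Prod.mk.eta]
    exact hs
  · have hsub : Icc s.1 (H.rhit s) ⊆ {x | ((x, s.2) : ℝ × ℝ) ∈ H.region} := by
      rw [← closure_Ico (ne_of_lt hlt)]
      exact hclosed.closure_subset_iff.mpr hIco
    exact hsub hx

lemma lhit_spec {s : ℝ × ℝ} (hs : s ∈ H.region) :
    H.lhit s ≤ s.1 ∧ H.xs 0 ≤ H.lhit s ∧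
      ∀ x ∈ Icc (H.lhit s) s.1, ((x, s.2) : ℝ × ℝ) ∈ H.region := by
  set R := {x | x ≤ s.1 ∧ Icc x s.1 ×ˢ ({s.2} : Set ℝ) ⊆ H.region} with hR
  have hmem : s.1 ∈ R := by
    refine ⟨le_refl _, fun z hz => ?_⟩
    rw [mem_prod] at hz
    have h1 : z.1 = s.1 := le_antisymm hz.1.2 hz.1.1
    have h2 : z.2 = s.2 := hz.2
    rw [show z = (z.1, z.2) from rfl, h1, h2, Prod.mk.eta]
    exact hs
  have hkey : ∀ x ∈ R, H.xs 0 ≤ x := by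
    intro x hx
    have : ((x, s.2) : ℝ × ℝ) ∈ H.region := hx.2 (mk_mem_prod ⟨le_refl x, hx.1⟩ rfl)
    exact (VProf.cond_range (mem_region_iff.mp this).2).1
  have hbdd : BddBelow R := ⟨H.xs 0, hkey⟩
  have h1 : H.lhit s ≤ s.1 := csInf_le hbdd hmem
  have h2 : H.xs 0 ≤ H.lhit s := le_csInf ⟨s.1, hmem⟩ hkey
  refine ⟨h1, h2, ?_⟩
  have hclosed : IsClosed {x | ((x, s.2) : ℝ × ℝ) ∈ H.region} :=
    region_closed.preimage (Continuous.prodMk continuous_id continuous_const)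
  have hIoc : Ioc (H.lhit s) s.1 ⊆ {x | ((x, s.2) : ℝ × ℝ) ∈ H.region} := by
    intro x hx
    obtain ⟨ρ, hρR, hρx⟩ := exists_lt_of_csInf_lt ⟨s.1, hmem⟩ hx.1
    exact hρR.2 (mk_mem_prod ⟨hρx.le, hx.2⟩ rfl)
  intro x hx
  rcases eq_or_lt_of_le h1 with heq | hlt
  · have : x = s.1 := le_antisymm hx.2 (heq ▸ hx.1)
    rw [this, Prod.mk.eta]
    exact hs
  · have hsub : Icc (H.lhit s) s.1 ⊆ {x | ((x, s.2) : ℝ × ℝ) ∈ H.region} := by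
      rw [← closure_Ioc (ne_of_lt hlt)]
      exact hclosed.closure_subset_iff.mpr hIoc
    exact hsub hx

lemma rpt_fst {s : ℝ × ℝ} : (H.rpt s).1 = H.rhit s := by
  rw [rpt]; split
  · rename_i hc; rw [← hc]
  · rfl

lemma lpt_fst {s : ℝ × ℝ} : (H.lpt s).1 = H.lhit s := by
  rw [lpt]; split
  · rename_i hc; rw [← hc]
  · rfl

end DoubleHistogram
namespace DoubleHistogram

variable {H : DoubleHistogram}

lemma bot_triv {x c : ℝ} (hc : c ≤ 0) (hx : x ∈ Icc (H.xs 0) (H.xs (Fin.last H.m))) :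
    H.Pbot.cond x c := by
  obtain ⟨i, hi⟩ := VProf.tile (P := H.Pbot) (by rw [Pbot_b0, Pbot_blast]; exact hx)
  refine ⟨i, hi, ?_⟩
  show max c 0 ≤ -H.d i
  exact max_le (by linarith [H.d_neg i]) (by linarith [H.d_neg i])

lemma top_triv {x c : ℝ} (hc : c ≤ 0) (hx : x ∈ Icc (H.xs 0) (H.xs (Fin.last H.m))) :
    H.Ptop.cond x c := by
  obtain ⟨j, hj⟩ := VProf.tile (P := H.Ptop) (by rw [top_range_eq]; exact hx)
  refine ⟨j, hj, ?_⟩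
  show max c 0 ≤ H.h j
  exact max_le (by linarith [H.h_pos j]) (by linarith [H.h_pos j])

lemma top_x_range {x c : ℝ} (h : H.Ptop.cond x c) :
    x ∈ Icc (H.xs 0) (H.xs (Fin.last H.m)) := by
  rw [← top_range_eq]; exact VProf.cond_range h

lemma bot_x_range {x c : ℝ} (h : H.Pbot.cond x c) :
    x ∈ Icc (H.xs 0) (H.xs (Fin.last H.m)) := VProf.cond_range h

lemma rhit_set_top {s : ℝ × ℝ} (hs2 : 0 < s.2) :
    {x | s.1 ≤ x ∧ Icc s.1 x ×ˢ ({s.2} : Set ℝ) ⊆ H.region} =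
      {x | s.1 ≤ x ∧ ∀ x' ∈ Icc s.1 x, H.Ptop.cond x' s.2} := by
  ext x
  simp only [mem_setOf_eq]
  apply and_congr_right
  intro _
  constructor
  · intro hsub x' hx'
    exact (mem_region_iff.mp (hsub (mk_mem_prod hx' rfl))).1
  · intro hc z hz
    rw [mem_prod, mem_singleton_iff] at hz
    rw [show z = (z.1, z.2) from rfl, hz.2, mem_region_iff]
    exact ⟨hc z.1 hz.1, bot_triv (by linarith) (top_x_range (hc z.1 hz.1))⟩

lemma rhit_set_bot {s : ℝ × ℝ} (hs2 : s.2 < 0) :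
    {x | s.1 ≤ x ∧ Icc s.1 x ×ˢ ({s.2} : Set ℝ) ⊆ H.region} =
      {x | s.1 ≤ x ∧ ∀ x' ∈ Icc s.1 x, H.Pbot.cond x' (-s.2)} := by
  ext x
  simp only [mem_setOf_eq]
  apply and_congr_right
  intro _
  constructor
  · intro hsub x' hx'
    exact (mem_region_iff.mp (hsub (mk_mem_prod hx' rfl))).2
  · intro hc z hz
    rw [mem_prod, mem_singleton_iff] at hz
    rw [show z = (z.1, z.2) from rfl, hz.2, mem_region_iff]
    exact ⟨top_triv (by linarith) (bot_x_range (hc z.1 hz.1)), hc z.1 hz.1⟩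

lemma lhit_set_top {s : ℝ × ℝ} (hs2 : 0 < s.2) :
    {x | x ≤ s.1 ∧ Icc x s.1 ×ˢ ({s.2} : Set ℝ) ⊆ H.region} =
      {x | x ≤ s.1 ∧ ∀ x' ∈ Icc x s.1, H.Ptop.cond x' s.2} := by
  ext x
  simp only [mem_setOf_eq]
  apply and_congr_right
  intro _
  constructor
  · intro hsub x' hx'
    exact (mem_region_iff.mp (hsub (mk_mem_prod hx' rfl))).1
  · intro hc z hz
    rw [mem_prod, mem_singleton_iff] at hz
    rw [show z = (z.1, z.2) from rfl, hz.2, mem_region_iff]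
    exact ⟨hc z.1 hz.1, bot_triv (by linarith) (top_x_range (hc z.1 hz.1))⟩

lemma lhit_set_bot {s : ℝ × ℝ} (hs2 : s.2 < 0) :
    {x | x ≤ s.1 ∧ Icc x s.1 ×ˢ ({s.2} : Set ℝ) ⊆ H.region} =
      {x | x ≤ s.1 ∧ ∀ x' ∈ Icc x s.1, H.Pbot.cond x' (-s.2)} := by
  ext x
  simp only [mem_setOf_eq]
  apply and_congr_right
  intro _
  constructor
  · intro hsub x' hx'
    exact (mem_region_iff.mp (hsub (mk_mem_prod hx' rfl))).2
  · intro hc z hz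
    rw [mem_prod, mem_singleton_iff] at hz
    rw [show z = (z.1, z.2) from rfl, hz.2, mem_region_iff]
    exact ⟨top_triv (by linarith) (bot_x_range (hc z.1 hz.1)), hc z.1 hz.1⟩

lemma blocker_right {s : ℝ × ℝ} (hs : s ∈ H.verts)
    (hlt : H.rhit s < H.xs (Fin.last H.m)) :
    ∃ w ∈ H.Nbr s, w.1 = H.rhit s := by
  have hsr := verts_subset_region hs
  have hsc := mem_region_iff.mp hsr
  have hs1r : s.1 ≤ H.rhit s := (rhit_spec hsr).1
  rcases lt_or_gt_of_ne (verts_y_ne hs) with hneg | hpos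
  · -- bottom
    have hrw : H.rhit s = sSup {x | s.1 ≤ x ∧ ∀ x' ∈ Icc s.1 x, H.Pbot.cond x' (-s.2)} := by
      rw [rhit, rhit_set_bot hneg]
    have hc : (0:ℝ) < -s.2 := by linarith
    have ha : H.Pbot.cond s.1 (-s.2) := hsc.2
    obtain ⟨hb1, hb2, hb3⟩ := VProf.block_seg (P := H.Pbot) ha
    have hlt' : sSup {x | s.1 ≤ x ∧ ∀ x' ∈ Icc s.1 x, H.Pbot.cond x' (-s.2)} <
        H.Pbot.b (Fin.last H.Pbot.N) := by
      rw [Pbot_blast, ← hrw]; exact hlt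
    obtain ⟨k, hk1, hk2⟩ := VProf.block_vertex (P := H.Pbot) hc ha hlt'
    have hXr : H.rhit s = H.xs k.castSucc := by rw [hrw, hk1]
    have hdk : -H.d k < -s.2 := hk2
    refine ⟨(H.xs k.castSucc, H.d k), ⟨Or.inl (mem_iUnion.mpr ⟨k, Or.inl rfl⟩), Or.inr ?_⟩,
      hXr.symm⟩
    rw [covisible_iff]
    intro x hx
    rw [show ((H.xs k.castSucc, H.d k) : ℝ × ℝ).1 = H.xs k.castSucc from rfl,
      min_eq_left (hXr ▸ hs1r), max_eq_right (hXr ▸ hs1r)] at hx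
    have hxI : x ∈ Icc s.1 (sSup {x | s.1 ≤ x ∧ ∀ x' ∈ Icc s.1 x, H.Pbot.cond x' (-s.2)}) := by
      rw [hk1]; exact hx
    have hcx : H.Pbot.cond x (-s.2) := hb3 x hxI
    constructor
    · exact top_triv (by simp only; exact max_le hneg.le (H.d_neg k).le) (bot_x_range hcx)
    · refine VProf.cond_le ?_ hcx
      show max (max (-s.2) (-H.d k)) 0 ≤ max (-s.2) 0
      exact max_le (max_le (le_max_left _ _) (le_trans hdk.le (le_max_left _ _)))
        (le_max_right _ _)
  · -- top
    have hrw : H.rhit s = sSup {x | s.1 ≤ x ∧ ∀ x' ∈ Icc s.1 x, H.Ptop.cond x' s.2} := by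
      rw [rhit, rhit_set_top hpos]
    have ha : H.Ptop.cond s.1 s.2 := hsc.1
    obtain ⟨hb1, hb2, hb3⟩ := VProf.block_seg (P := H.Ptop) ha
    have hlt' : sSup {x | s.1 ≤ x ∧ ∀ x' ∈ Icc s.1 x, H.Ptop.cond x' s.2} <
        H.Ptop.b (Fin.last H.Ptop.N) := by
      rw [Ptop_blast, ← hrw]; exact hlt
    obtain ⟨k, hk1, hk2⟩ := VProf.block_vertex (P := H.Ptop) hpos ha hlt'
    have hXr : H.rhit s = H.ys k.castSucc := by rw [hrw, hk1]
    have hhk : H.h k < s.2 := hk2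
    refine ⟨(H.ys k.castSucc, H.h k), ⟨Or.inr (mem_iUnion.mpr ⟨k, Or.inl rfl⟩), Or.inr ?_⟩,
      hXr.symm⟩
    rw [covisible_iff]
    intro x hx
    rw [show ((H.ys k.castSucc, H.h k) : ℝ × ℝ).1 = H.ys k.castSucc from rfl,
      min_eq_left (hXr ▸ hs1r), max_eq_right (hXr ▸ hs1r)] at hx
    have hxI : x ∈ Icc s.1 (sSup {x | s.1 ≤ x ∧ ∀ x' ∈ Icc s.1 x, H.Ptop.cond x' s.2}) := by
      rw [hk1]; exact hx
    have hcx : H.Ptop.cond x s.2 := hb3 x hxI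
    constructor
    · refine VProf.cond_le ?_ hcx
      show max (max s.2 (H.h k)) 0 ≤ max s.2 0
      exact max_le (max_le (le_max_left _ _) (le_trans hhk.le (le_max_left _ _)))
        (le_max_right _ _)
    · exact bot_triv (by simp only; exact max_le (by linarith) (by linarith [H.h_pos k]))
        (top_x_range hcx)

lemma blocker_left {s : ℝ × ℝ} (hs : s ∈ H.verts)
    (hgt : H.xs 0 < H.lhit s) :
    ∃ w ∈ H.Nbr s, w.1 = H.lhit s := by
  have hsr := verts_subset_region hs
  have hsc := mem_region_iff.mp hsr
  have hs1r : H.lhit s ≤ s.1 := (lhit_spec hsr).1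
  rcases lt_or_gt_of_ne (verts_y_ne hs) with hneg | hpos
  · -- bottom
    have hrw : H.lhit s = sInf {x | x ≤ s.1 ∧ ∀ x' ∈ Icc x s.1, H.Pbot.cond x' (-s.2)} := by
      rw [lhit, lhit_set_bot hneg]
    have hc : (0:ℝ) < -s.2 := by linarith
    have ha : H.Pbot.cond s.1 (-s.2) := hsc.2
    obtain ⟨hb1, hb2, hb3⟩ := VProf.blockR_seg (P := H.Pbot) ha
    have hgt' : H.Pbot.b 0 < sInf {x | x ≤ s.1 ∧ ∀ x' ∈ Icc x s.1, H.Pbot.cond x' (-s.2)} := by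
      rw [Pbot_b0, ← hrw]; exact hgt
    obtain ⟨k, hk1, hk2⟩ := VProf.blockR_vertex (P := H.Pbot) hc ha hgt'
    have hXr : H.lhit s = H.xs k.succ := by rw [hrw, hk1]
    have hdk : -H.d k < -s.2 := hk2
    refine ⟨(H.xs k.succ, H.d k), ⟨Or.inl (mem_iUnion.mpr ⟨k, Or.inr rfl⟩), Or.inr ?_⟩,
      hXr.symm⟩
    rw [covisible_iff]
    intro x hx
    rw [show ((H.xs k.succ, H.d k) : ℝ × ℝ).1 = H.xs k.succ from rfl,
      min_eq_right (hXr ▸ hs1r), max_eq_left (hXr ▸ hs1r)] at hx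
    have hxI : x ∈ Icc (sInf {x | x ≤ s.1 ∧ ∀ x' ∈ Icc x s.1, H.Pbot.cond x' (-s.2)}) s.1 := by
      rw [hk1]; exact hx
    have hcx : H.Pbot.cond x (-s.2) := hb3 x hxI
    constructor
    · exact top_triv (by simp only; exact max_le hneg.le (H.d_neg k).le) (bot_x_range hcx)
    · refine VProf.cond_le ?_ hcx
      show max (max (-s.2) (-H.d k)) 0 ≤ max (-s.2) 0
      exact max_le (max_le (le_max_left _ _) (le_trans hdk.le (le_max_left _ _)))
        (le_max_right _ _)
  · -- top
    have hrw : H.lhit s = sInf {x | x ≤ s.1 ∧ ∀ x' ∈ Icc x s.1, H.Ptop.cond x' s.2} := by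
      rw [lhit, lhit_set_top hpos]
    have ha : H.Ptop.cond s.1 s.2 := hsc.1
    obtain ⟨hb1, hb2, hb3⟩ := VProf.blockR_seg (P := H.Ptop) ha
    have hgt' : H.Ptop.b 0 < sInf {x | x ≤ s.1 ∧ ∀ x' ∈ Icc x s.1, H.Ptop.cond x' s.2} := by
      rw [Ptop_b0, ← hrw]; exact hgt
    obtain ⟨k, hk1, hk2⟩ := VProf.blockR_vertex (P := H.Ptop) hpos ha hgt'
    have hXr : H.lhit s = H.ys k.succ := by rw [hrw, hk1]
    have hhk : H.h k < s.2 := hk2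
    refine ⟨(H.ys k.succ, H.h k), ⟨Or.inr (mem_iUnion.mpr ⟨k, Or.inr rfl⟩), Or.inr ?_⟩,
      hXr.symm⟩
    rw [covisible_iff]
    intro x hx
    rw [show ((H.ys k.succ, H.h k) : ℝ × ℝ).1 = H.ys k.succ from rfl,
      min_eq_right (hXr ▸ hs1r), max_eq_left (hXr ▸ hs1r)] at hx
    have hxI : x ∈ Icc (sInf {x | x ≤ s.1 ∧ ∀ x' ∈ Icc x s.1, H.Ptop.cond x' s.2}) s.1 := by
      rw [hk1]; exact hx
    have hcx : H.Ptop.cond x s.2 := hb3 x hxI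
    constructor
    · refine VProf.cond_le ?_ hcx
      show max (max s.2 (H.h k)) 0 ≤ max s.2 0
      exact max_le (max_le (le_max_left _ _) (le_trans hhk.le (le_max_left _ _)))
        (le_max_right _ _)
    · exact bot_triv (by simp only; exact max_le (by linarith) (by linarith [H.h_pos k]))
        (top_x_range hcx)

end DoubleHistogram
namespace VProf

variable {P : VProf}

lemma flip_pv {z : ℝ × ℝ} (hz : z ∈ P.flip.pv) : ((-z.1, z.2) : ℝ × ℝ) ∈ P.pv := by
  rw [pv, mem_iUnion] at hz
  obtain ⟨k, hk⟩ := hz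
  have e1 : P.flip.b k.castSucc = -P.b k.rev.succ := by
    show -P.b (k.castSucc).rev = _; rw [Fin.rev_castSucc]
  have e2 : P.flip.b k.succ = -P.b k.rev.castSucc := by
    show -P.b (k.succ).rev = _; rw [Fin.rev_succ]
  simp only [mem_insert_iff, mem_singleton_iff] at hk
  rcases hk with rfl | rfl
  · show ((-(P.flip.b k.castSucc), P.flip.ht k) : ℝ × ℝ) ∈ P.pv
    rw [e1, flip_ht, neg_neg]
    exact pv_right (P := P) k.rev
  · show ((-(P.flip.b k.succ), P.flip.ht k) : ℝ × ℝ) ∈ P.pv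
    rw [e2, flip_ht, neg_neg]
    exact pv_left (P := P) k.rev

end VProf

namespace DoubleHistogram

variable {H : DoubleHistogram}

lemma pv_top_subset : H.Ptop.pv ⊆ H.verts := fun _ hz => Or.inr hz

lemma pv_bot_mem {z : ℝ × ℝ} (hz : z ∈ H.Pbot.pv) : ((z.1, -z.2) : ℝ × ℝ) ∈ H.verts := by
  rw [VProf.pv, mem_iUnion] at hz
  obtain ⟨i, hi⟩ := hz
  simp only [mem_insert_iff, mem_singleton_iff] at hi
  rcases hi with rfl | rfl
  · refine Or.inl (mem_iUnion.mpr ⟨i, ?_⟩)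
    show ((H.xs i.castSucc, -(-H.d i)) : ℝ × ℝ) ∈ _
    rw [neg_neg]
    exact mem_insert _ _
  · refine Or.inl (mem_iUnion.mpr ⟨i, ?_⟩)
    show ((H.xs i.succ, -(-H.d i)) : ℝ × ℝ) ∈ _
    rw [neg_neg]
    exact mem_insert_iff.mpr (Or.inr rfl)

structure CoreSide (H : DoubleHistogram) where
  P : VProf
  Q : VProf
  μ : ℝ × ℝ → ℝ × ℝ
  hcov : ∀ p q : ℝ × ℝ, H.covisible p q ↔
    ∀ x ∈ Icc (min (μ p).1 (μ q).1) (max (μ p).1 (μ q).1),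
      P.cond x (max (μ p).2 (μ q).2) ∧ Q.cond x (max (-(μ p).2) (-(μ q).2))
  hvert : ∀ v ∈ H.verts, 0 < (μ v).2 → ∃ j, (μ v).1 ∈ P.col j ∧ (μ v).2 = P.ht j
  hpv : ∀ z ∈ P.pv, ∃ v ∈ H.verts, μ v = z

lemma core (C : CoreSide H) (s t n f : ℝ × ℝ)
    (hs : s ∈ H.verts) (hn : n ∈ H.Nbr s)
    (hst : (C.μ s).1 < (C.μ t).1)
    (hnUB : ∀ w ∈ H.Nbr s, (C.μ w).1 ≤ (C.μ t).1 → (C.μ w).1 ≤ (C.μ n).1)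
    (hnmin : ∀ w ∈ H.Nbr s, (C.μ w).1 = (C.μ n).1 → |(C.μ n).2| ≤ |(C.μ w).2|)
    (htf : (C.μ t).1 ≤ (C.μ f).1)
    (hfb : (C.μ f).1 ≤ C.P.b (Fin.last C.P.N))
    (SBP : ∀ x ∈ Icc (C.μ s).1 (C.μ f).1, C.P.cond x (max (C.μ s).2 (C.μ f).2))
    (SBQ : ∀ x ∈ Icc (C.μ s).1 (C.μ f).1, C.Q.cond x (max (-(C.μ s).2) (-(C.μ f).2)))
    (hUB : ∀ w ∈ H.Nbr s, (C.μ t).1 ≤ (C.μ w).1 → (C.μ f).1 ≤ (C.μ w).1)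
    (h2 : max (max (C.μ s).2 (C.μ f).2) 0 < (C.μ n).2) :
    ∀ x ∈ Icc (C.μ n).1 (C.μ f).1, C.P.cond x (C.μ n).2 := by
  have hsn1 : (C.μ s).1 ≤ (C.μ n).1 := hnUB s (self_mem_Nbr hs) hst.le
  have hny0 : 0 < (C.μ n).2 := lt_of_le_of_lt (le_max_right _ 0) h2
  have hnys : (C.μ s).2 < (C.μ n).2 :=
    lt_of_le_of_lt (le_trans (le_max_left _ _) (le_max_left _ _)) h2
  have hns : n ≠ s := by
    intro he; rw [he] at hnys; exact lt_irrefl _ hnys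
  have hcovsn : H.covisible s n := covisible_of_mem_Nbr hn hns
  by_contra hcon
  push_neg at hcon
  obtain ⟨xst, hxst, hfail⟩ := hcon
  obtain ⟨j₀, hj₀col, hj₀ht⟩ := C.hvert n (Nbr_subset_verts hn) hny0
  obtain ⟨k, hk1, hk2, hk3, hk4⟩ := VProf.stair (P := C.P) hny0 hj₀col (le_of_eq hj₀ht)
    hxst.1 (le_trans hxst.2 hfb) hfail
  set X := C.P.b k.castSucc with hX
  obtain ⟨w, hwv, hwμ⟩ := C.hpv (X, C.P.ht k) (VProf.pv_left k)
  have hcond_sn : ∀ x ∈ Icc (C.μ s).1 (C.μ n).1, C.P.cond x (C.μ n).2 := by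
    intro x hx
    have hmm := ((C.hcov s n).mp hcovsn) x (by
      rw [min_eq_left hsn1, max_eq_right hsn1]; exact hx)
    refine VProf.cond_le ?_ hmm.1
    rw [max_eq_left hny0.le]
    exact le_trans (le_max_right _ _) (le_max_left _ _)
  have hcovP : ∀ x ∈ Icc (C.μ s).1 X, C.P.cond x (C.μ n).2 := by
    intro x hx
    rcases le_total x (C.μ n).1 with h | h
    · exact hcond_sn x ⟨hx.1, h⟩
    · exact hk4 x ⟨h, hx.2⟩
  have hXf : X ≤ (C.μ f).1 := le_trans hk2.le hxst.2
  have hcovsw : H.covisible s w := by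
    rw [C.hcov s w, hwμ]
    have hsX : (C.μ s).1 ≤ X := le_trans hsn1 hk1
    rw [show ((X, C.P.ht k) : ℝ × ℝ).1 = X from rfl,
      show ((X, C.P.ht k) : ℝ × ℝ).2 = C.P.ht k from rfl,
      min_eq_left hsX, max_eq_right hsX]
    intro x hx
    constructor
    · refine VProf.cond_le ?_ (hcovP x hx)
      rw [max_eq_left hny0.le]
      exact max_le (max_le hnys.le hk3.le) hny0.le
    · refine VProf.cond_le ?_ (SBQ x ⟨hx.1, le_trans hx.2 hXf⟩)
      refine max_le (max_le ?_ ?_) (le_max_right _ _)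
      · exact le_trans (le_max_left _ _) (le_max_left _ _)
      · exact le_trans (neg_nonpos.mpr (C.P.pos k).le) (le_max_right _ _)
  have hwN : w ∈ H.Nbr s := ⟨hwv, Or.inr hcovsw⟩
  have hwx : (C.μ w).1 = X := by rw [hwμ]
  have hwy : (C.μ w).2 = C.P.ht k := by rw [hwμ]
  rcases le_or_gt X (C.μ t).1 with hle | hgt
  · have hXn : X ≤ (C.μ n).1 := by
      rw [← hwx]; exact hnUB w hwN (by rw [hwx]; exact hle)
    have hXeq : (C.μ w).1 = (C.μ n).1 := by rw [hwx]; exact le_antisymm hXn hk1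
    have habs := hnmin w hwN hXeq
    rw [hwy, abs_of_pos hny0, abs_of_pos (C.P.pos k)] at habs
    exact absurd habs (not_le.mpr hk3)
  · have hfX := hUB w hwN (by rw [hwx]; exact hgt.le)
    rw [hwx] at hfX
    exact absurd hk2 (not_lt.mpr (le_trans hxst.2 hfX))

def sideTL (H : DoubleHistogram) : CoreSide H where
  P := H.Ptop
  Q := H.Pbot
  μ := id
  hcov := fun _ _ => covisible_iff
  hvert := fun _ hv h2 => mem_verts_top hv h2
  hpv := fun z hz => ⟨z, pv_top_subset hz, rfl⟩

def sideBL (H : DoubleHistogram) : CoreSide H where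
  P := H.Pbot
  Q := H.Ptop
  μ := fun p => (p.1, -p.2)
  hcov := fun p q => by
    show H.covisible p q ↔ ∀ x ∈ Icc (min p.1 q.1) (max p.1 q.1),
      H.Pbot.cond x (max (-p.2) (-q.2)) ∧ H.Ptop.cond x (max (-(-p.2)) (-(-q.2)))
    rw [covisible_iff]
    constructor
    · intro hA x hx
      obtain ⟨h1, h2⟩ := hA x hx
      refine ⟨h2, ?_⟩
      simpa only [neg_neg] using h1
    · intro hA x hx
      obtain ⟨h1, h2⟩ := hA x hx
      refine ⟨?_, h1⟩
      simpa only [neg_neg] using h2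
  hvert := fun v hv h2 => by
    obtain ⟨i, hi1, hi2⟩ := mem_verts_bot hv (neg_pos.mp h2)
    exact ⟨i, hi1, by show -v.2 = -H.d i; rw [hi2]⟩
  hpv := fun z hz => ⟨(z.1, -z.2), pv_bot_mem hz, by simp⟩

def sideTR (H : DoubleHistogram) : CoreSide H where
  P := H.Ptop.flip
  Q := H.Pbot.flip
  μ := fun p => (-p.1, p.2)
  hcov := fun p q => by
    show H.covisible p q ↔ ∀ x ∈ Icc (min (-p.1) (-q.1)) (max (-p.1) (-q.1)),
      H.Ptop.flip.cond x (max p.2 q.2) ∧ H.Pbot.flip.cond x (max (-p.2) (-q.2))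
    rw [covisible_iff]
    have e1 : min (-p.1) (-q.1) = -(max p.1 q.1) := min_neg_neg _ _
    have e2 : max (-p.1) (-q.1) = -(min p.1 q.1) := max_neg_neg _ _
    constructor
    · intro hA x hx
      rw [mem_Icc, e1, e2] at hx
      have hx' : -x ∈ Icc (min p.1 q.1) (max p.1 q.1) := by
        rw [mem_Icc]; constructor <;> linarith [hx.1, hx.2]
      obtain ⟨h1, h2⟩ := hA (-x) hx'
      exact ⟨VProf.flip_cond.mpr h1, VProf.flip_cond.mpr h2⟩
    · intro hA x hx
      rw [mem_Icc] at hx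
      have hx' : -x ∈ Icc (min (-p.1) (-q.1)) (max (-p.1) (-q.1)) := by
        rw [mem_Icc, e1, e2]; constructor <;> linarith [hx.1, hx.2]
      obtain ⟨h1, h2⟩ := hA (-x) hx'
      rw [VProf.flip_cond, neg_neg] at h1 h2
      exact ⟨h1, h2⟩
  hvert := fun v hv h2 => by
    obtain ⟨j, hj1, hj2⟩ := mem_verts_top hv h2
    refine ⟨j.rev, ?_, ?_⟩
    · rw [VProf.flip_col, Fin.rev_rev]
      show -(-v.1) ∈ H.Ptop.col j
      rw [neg_neg]; exact hj1
    · rw [VProf.flip_ht, Fin.rev_rev]; exact hj2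
  hpv := fun z hz => by
    refine ⟨(-z.1, z.2), pv_top_subset (VProf.flip_pv hz), ?_⟩
    show ((-(-z.1), z.2) : ℝ × ℝ) = z
    rw [neg_neg]

def sideBR (H : DoubleHistogram) : CoreSide H where
  P := H.Pbot.flip
  Q := H.Ptop.flip
  μ := fun p => (-p.1, -p.2)
  hcov := fun p q => by
    show H.covisible p q ↔ ∀ x ∈ Icc (min (-p.1) (-q.1)) (max (-p.1) (-q.1)),
      H.Pbot.flip.cond x (max (-p.2) (-q.2)) ∧ H.Ptop.flip.cond x (max (-(-p.2)) (-(-q.2)))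
    rw [covisible_iff]
    have e1 : min (-p.1) (-q.1) = -(max p.1 q.1) := min_neg_neg _ _
    have e2 : max (-p.1) (-q.1) = -(min p.1 q.1) := max_neg_neg _ _
    constructor
    · intro hA x hx
      rw [mem_Icc, e1, e2] at hx
      have hx' : -x ∈ Icc (min p.1 q.1) (max p.1 q.1) := by
        rw [mem_Icc]; constructor <;> linarith [hx.1, hx.2]
      obtain ⟨h1, h2⟩ := hA (-x) hx'
      refine ⟨VProf.flip_cond.mpr h2, VProf.flip_cond.mpr ?_⟩
      simpa only [neg_neg] using h1
    · intro hA x hx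
      rw [mem_Icc] at hx
      have hx' : -x ∈ Icc (min (-p.1) (-q.1)) (max (-p.1) (-q.1)) := by
        rw [mem_Icc, e1, e2]; constructor <;> linarith [hx.1, hx.2]
      obtain ⟨h1, h2⟩ := hA (-x) hx'
      rw [VProf.flip_cond, neg_neg] at h1 h2
      refine ⟨?_, h1⟩
      simpa only [neg_neg] using h2
  hvert := fun v hv h2 => by
    obtain ⟨i, hi1, hi2⟩ := mem_verts_bot hv (neg_pos.mp h2)
    refine ⟨i.rev, ?_, ?_⟩
    · rw [VProf.flip_col, Fin.rev_rev]
      show -(-v.1) ∈ H.Pbot.col i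
      rw [neg_neg]; exact hi1
    · rw [VProf.flip_ht, Fin.rev_rev]
      show -v.2 = -H.d i
      rw [hi2]
  hpv := fun z hz => by
    refine ⟨(-z.1, -z.2), ?_, ?_⟩
    · have := pv_bot_mem (VProf.flip_pv hz)
      simpa using this
    · show ((-(-z.1), -(-z.2)) : ℝ × ℝ) = z
      rw [neg_neg, neg_neg]

end DoubleHistogram
namespace DoubleHistogram

variable {H : DoubleHistogram}

lemma main_dir_L {s t f : ℝ × ℝ} (hs : s ∈ H.verts)
    (hst : s.1 < t.1) (htf : t.1 ≤ f.1) (hfb : f.1 ≤ H.xs (Fin.last H.m))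
    (SBt : ∀ x ∈ Icc s.1 f.1, H.Ptop.cond x (max s.2 f.2))
    (SBb : ∀ x ∈ Icc s.1 f.1, H.Pbot.cond x (max (-s.2) (-f.2)))
    (hUB : ∀ w ∈ H.Nbr s, t.1 ≤ w.1 → f.1 ≤ w.1) :
    H.covisible (H.nd s t) f := by
  have hseta : H.nd s t = (sSup {x | (∃ y, (x, y) ∈ H.Nbr s) ∧ x ≤ t.1},
      closestToBase {y | (sSup {x | (∃ y, (x, y) ∈ H.Nbr s) ∧ x ≤ t.1}, y) ∈ H.Nbr s}) := by
    rw [nd, if_pos hst]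
  set A := {x | (∃ y, (x, y) ∈ H.Nbr s) ∧ x ≤ t.1} with hA
  have hsA : s.1 ∈ A := ⟨⟨s.2, by rw [Prod.mk.eta]; exact self_mem_Nbr hs⟩, hst.le⟩
  have hAf : A.Finite := by
    apply ((Nbr_finite (H := H) s).image Prod.fst).subset
    rintro x ⟨⟨y, hy⟩, -⟩
    exact ⟨(x, y), hy, rfl⟩
  have hAne : A.Nonempty := ⟨s.1, hsA⟩
  set nx := sSup A with hnx
  have hnxA : nx ∈ A := hAne.csSup_mem hAf
  have hnxUB : ∀ x ∈ A, x ≤ nx := fun x hx => le_csSup hAf.bddAbove hx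
  have hnxt : nx ≤ t.1 := hnxA.2
  have hsnx : s.1 ≤ nx := hnxUB s.1 hsA
  set Y := {y | ((nx, y) : ℝ × ℝ) ∈ H.Nbr s} with hY
  have hYf : Y.Finite := by
    apply ((Nbr_finite (H := H) s).image Prod.snd).subset
    intro y hy
    exact ⟨(nx, y), hy, rfl⟩
  have hYne : Y.Nonempty := by
    obtain ⟨⟨y, hy⟩, -⟩ := hnxA
    exact ⟨y, hy⟩
  obtain ⟨hnyY, hnymin⟩ := closestToBase_spec hYf hYne
  set ny := closestToBase Y with hny
  have hnN : ((nx, ny) : ℝ × ℝ) ∈ H.Nbr s := hnyY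
  rw [hseta, covisible_iff]
  intro x hx
  rw [show ((nx, ny) : ℝ × ℝ).1 = nx from rfl,
    min_eq_left (le_trans hnxt htf), max_eq_right (le_trans hnxt htf)] at hx
  have hxsf : x ∈ Icc s.1 f.1 := ⟨le_trans hsnx hx.1, hx.2⟩
  have hnUB' : ∀ w ∈ H.Nbr s, w.1 ≤ t.1 → w.1 ≤ nx := fun w hw hwt =>
    hnxUB w.1 ⟨⟨w.2, by rw [Prod.mk.eta]; exact hw⟩, hwt⟩
  have hnmin' : ∀ w ∈ H.Nbr s, w.1 = nx → |ny| ≤ |w.2| := fun w hw he => by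
    refine hnymin w.2 ?_
    show ((nx, w.2) : ℝ × ℝ) ∈ H.Nbr s
    rw [← he, Prod.mk.eta]
    exact hw
  constructor
  · rcases le_or_gt ny (max (max s.2 f.2) 0) with hc | hc
    · refine VProf.cond_le ?_ (SBt x hxsf)
      refine max_le (max_le hc ?_) (le_max_right _ _)
      exact le_trans (le_max_right s.2 f.2) (le_max_left _ _)
    · have hcore := core (sideTL H) s t (nx, ny) f hs hnN hst hnUB' hnmin' htf
        (by show f.1 ≤ H.Ptop.b (Fin.last H.Ptop.N); rw [Ptop_blast]; exact hfb)
        SBt SBb hUB hc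
      have hf2 : f.2 ≤ ny := le_trans (le_trans (le_max_right s.2 f.2) (le_max_left _ _)) hc.le
      refine VProf.cond_le ?_ (hcore x hx)
      exact max_le (max_le (le_max_left _ _) (le_trans hf2 (le_max_left _ _))) (le_max_right _ _)
  · rcases le_or_gt (-ny) (max (max (-s.2) (-f.2)) 0) with hc | hc
    · refine VProf.cond_le ?_ (SBb x hxsf)
      refine max_le (max_le hc ?_) (le_max_right _ _)
      exact le_trans (le_max_right _ _) (le_max_left _ _)
    · have hcore := core (sideBL H) s t (nx, ny) f hs hnN hst
        (fun w hw hwt => hnUB' w hw hwt)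
        (fun w hw he => by
          have h5 := hnmin' w hw he
          show |(-ny)| ≤ |(-w.2)|
          rwa [abs_neg, abs_neg])

        htf (by show f.1 ≤ H.Pbot.b (Fin.last H.Pbot.N); rw [Pbot_blast]; exact hfb) SBb
        (by
          intro x' hx'
          show H.Ptop.cond x' (max (-(-s.2)) (-(-f.2)))
          refine VProf.cond_le ?_ (SBt x' hx')
          simp only [neg_neg]
          exact le_refl _)
        hUB hc
      have hf2 : -f.2 ≤ -ny :=
        le_trans (le_trans (le_max_right (-s.2) (-f.2)) (le_max_left _ _)) hc.le
      refine VProf.cond_le ?_ (hcore x hx)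
      show max (max (-ny) (-f.2)) 0 ≤ max (-ny) 0
      exact max_le (max_le (le_max_left _ _) (le_trans hf2 (le_max_left _ _))) (le_max_right _ _)

lemma main_dir_R {s t f : ℝ × ℝ} (hs : s ∈ H.verts)
    (hts : t.1 < s.1) (htf : f.1 ≤ t.1) (hfb : H.xs 0 ≤ f.1)
    (SBt : ∀ x ∈ Icc f.1 s.1, H.Ptop.cond x (max s.2 f.2))
    (SBb : ∀ x ∈ Icc f.1 s.1, H.Pbot.cond x (max (-s.2) (-f.2)))
    (hUB : ∀ w ∈ H.Nbr s, w.1 ≤ t.1 → w.1 ≤ f.1) :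
    H.covisible (H.nd s t) f := by
  have hseta : H.nd s t = (sInf {x | (∃ y, (x, y) ∈ H.Nbr s) ∧ t.1 ≤ x},
      closestToBase {y | (sInf {x | (∃ y, (x, y) ∈ H.Nbr s) ∧ t.1 ≤ x}, y) ∈ H.Nbr s}) := by
    rw [nd, if_neg (not_lt.mpr hts.le)]
  set A := {x | (∃ y, (x, y) ∈ H.Nbr s) ∧ t.1 ≤ x} with hA
  have hsA : s.1 ∈ A := ⟨⟨s.2, by rw [Prod.mk.eta]; exact self_mem_Nbr hs⟩, hts.le⟩
  have hAf : A.Finite := by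
    apply ((Nbr_finite (H := H) s).image Prod.fst).subset
    rintro x ⟨⟨y, hy⟩, -⟩
    exact ⟨(x, y), hy, rfl⟩
  have hAne : A.Nonempty := ⟨s.1, hsA⟩
  set nx := sInf A with hnx
  have hnxA : nx ∈ A := hAne.csInf_mem hAf
  have hnxLB : ∀ x ∈ A, nx ≤ x := fun x hx => csInf_le hAf.bddBelow hx
  have hnxt : t.1 ≤ nx := hnxA.2
  have hsnx : nx ≤ s.1 := hnxLB s.1 hsA
  set Y := {y | ((nx, y) : ℝ × ℝ) ∈ H.Nbr s} with hY
  have hYf : Y.Finite := by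
    apply ((Nbr_finite (H := H) s).image Prod.snd).subset
    intro y hy
    exact ⟨(nx, y), hy, rfl⟩
  have hYne : Y.Nonempty := by
    obtain ⟨⟨y, hy⟩, -⟩ := hnxA
    exact ⟨y, hy⟩
  obtain ⟨hnyY, hnymin⟩ := closestToBase_spec hYf hYne
  set ny := closestToBase Y with hny
  have hnN : ((nx, ny) : ℝ × ℝ) ∈ H.Nbr s := hnyY
  rw [hseta, covisible_iff]
  intro x hx
  rw [show ((nx, ny) : ℝ × ℝ).1 = nx from rfl,
    min_eq_right (le_trans htf hnxt), max_eq_left (le_trans htf hnxt)] at hx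
  have hxsf : x ∈ Icc f.1 s.1 := ⟨hx.1, le_trans hx.2 hsnx⟩
  have hnUB' : ∀ w ∈ H.Nbr s, t.1 ≤ w.1 → nx ≤ w.1 := fun w hw hwt =>
    hnxLB w.1 ⟨⟨w.2, by rw [Prod.mk.eta]; exact hw⟩, hwt⟩
  have hnmin' : ∀ w ∈ H.Nbr s, w.1 = nx → |ny| ≤ |w.2| := fun w hw he => by
    refine hnymin w.2 ?_
    show ((nx, w.2) : ℝ × ℝ) ∈ H.Nbr s
    rw [← he, Prod.mk.eta]
    exact hw
  constructor
  · rcases le_or_gt ny (max (max s.2 f.2) 0) with hc | hc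
    · refine VProf.cond_le ?_ (SBt x hxsf)
      refine max_le (max_le hc ?_) (le_max_right _ _)
      exact le_trans (le_max_right s.2 f.2) (le_max_left _ _)
    · have hcore := core (sideTR H) s t (nx, ny) f hs hnN (neg_lt_neg hts)
        (fun w hw hwt => neg_le_neg (hnUB' w hw (le_of_neg_le_neg hwt)))
        (fun w hw he => hnmin' w hw (neg_injective he))
        (neg_le_neg htf)
        (by
          show -f.1 ≤ H.Ptop.flip.b (Fin.last H.Ptop.flip.N)
          rw [VProf.flip_b_last, Ptop_b0]
          linarith)
        (by
          intro x' hx'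
          show H.Ptop.flip.cond x' (max s.2 f.2)
          refine VProf.flip_cond.mpr (SBt (-x') ?_)
          have hq1 : -s.1 ≤ x' := hx'.1
          have hq2 : x' ≤ -f.1 := hx'.2
          exact ⟨by linarith, by linarith⟩)
        (by
          intro x' hx'
          show H.Pbot.flip.cond x' (max (-s.2) (-f.2))
          refine VProf.flip_cond.mpr (SBb (-x') ?_)
          have hq1 : -s.1 ≤ x' := hx'.1
          have hq2 : x' ≤ -f.1 := hx'.2
          exact ⟨by linarith, by linarith⟩)
        (fun w hw hwt => neg_le_neg (hUB w hw (le_of_neg_le_neg hwt)))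
        hc
      have hcx : H.Ptop.flip.cond (-x) ny := hcore (-x) ⟨neg_le_neg hx.2, neg_le_neg hx.1⟩
      rw [VProf.flip_cond, neg_neg] at hcx
      have hf2 : f.2 ≤ ny := le_trans (le_trans (le_max_right s.2 f.2) (le_max_left _ _)) hc.le
      refine VProf.cond_le ?_ hcx
      exact max_le (max_le (le_max_left _ _) (le_trans hf2 (le_max_left _ _))) (le_max_right _ _)
  · rcases le_or_gt (-ny) (max (max (-s.2) (-f.2)) 0) with hc | hc
    · refine VProf.cond_le ?_ (SBb x hxsf)
      refine max_le (max_le hc ?_) (le_max_right _ _)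
      exact le_trans (le_max_right _ _) (le_max_left _ _)
    · have hcore := core (sideBR H) s t (nx, ny) f hs hnN (neg_lt_neg hts)
        (fun w hw hwt => neg_le_neg (hnUB' w hw (le_of_neg_le_neg hwt)))
        (fun w hw he => by
          have h5 := hnmin' w hw (neg_injective he)
          show |(-ny)| ≤ |(-w.2)|
          rwa [abs_neg, abs_neg])
        (neg_le_neg htf)
        (by
          show -f.1 ≤ H.Pbot.flip.b (Fin.last H.Pbot.flip.N)
          rw [VProf.flip_b_last, Pbot_b0]
          linarith)
        (by
          intro x' hx'
          show H.Pbot.flip.cond x' (max (-s.2) (-f.2))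
          refine VProf.flip_cond.mpr (SBb (-x') ?_)
          have hq1 : -s.1 ≤ x' := hx'.1
          have hq2 : x' ≤ -f.1 := hx'.2
          exact ⟨by linarith, by linarith⟩)
        (by
          intro x' hx'
          show H.Ptop.flip.cond x' (max (-(-s.2)) (-(-f.2)))
          refine VProf.flip_cond.mpr ?_
          have hq1 : -s.1 ≤ x' := hx'.1
          have hq2 : x' ≤ -f.1 := hx'.2
          have h6 := SBt (-x') ⟨by linarith, by linarith⟩
          refine VProf.cond_le ?_ h6
          simp only [neg_neg]
          exact le_refl _)
        (fun w hw hwt => neg_le_neg (hUB w hw (le_of_neg_le_neg hwt)))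
        hc
      have hcx : H.Pbot.flip.cond (-x) (-ny) := hcore (-x) ⟨neg_le_neg hx.2, neg_le_neg hx.1⟩
      rw [VProf.flip_cond, neg_neg] at hcx
      have hf2 : -f.2 ≤ -ny :=
        le_trans (le_trans (le_max_right (-s.2) (-f.2)) (le_max_left _ _)) hc.le
      refine VProf.cond_le ?_ hcx
      show max (max (-ny) (-f.2)) 0 ≤ max (-ny) 0
      exact max_le (max_le (le_max_left _ _) (le_trans hf2 (le_max_left _ _))) (le_max_right _ _)

lemma sameX {v w : ℝ × ℝ} (hv : v ∈ H.verts) (hw : w ∈ H.verts) (he : v.1 = w.1) :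
    H.covisible v w := by
  rw [covisible_iff]
  intro x hx
  rw [← he, min_self, max_self] at hx
  have hxv : x = v.1 := le_antisymm hx.2 hx.1
  subst hxv
  have hrange := verts_x_range hv
  constructor
  · rcases le_or_gt (max v.2 w.2) 0 with h0 | h0
    · exact top_triv h0 hrange
    · rcases max_choice v.2 w.2 with hm | hm
      · obtain ⟨j, hj1, hj2⟩ := mem_verts_top hv (hm ▸ h0)
        refine ⟨j, hj1, ?_⟩
        show max (max v.2 w.2) 0 ≤ H.h j
        rw [max_eq_left h0.le, hm]
        exact le_of_eq hj2
      · obtain ⟨j, hj1, hj2⟩ := mem_verts_top hw (hm ▸ h0)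
        refine ⟨j, by rw [he]; exact hj1, ?_⟩
        show max (max v.2 w.2) 0 ≤ H.h j
        rw [max_eq_left h0.le, hm]
        exact le_of_eq hj2
  · rcases le_or_gt (max (-v.2) (-w.2)) 0 with h0 | h0
    · exact bot_triv h0 hrange
    · rcases max_choice (-v.2) (-w.2) with hm | hm
      · obtain ⟨i, hi1, hi2⟩ := mem_verts_bot hv (neg_pos.mp (hm ▸ h0))
        refine ⟨i, hi1, ?_⟩
        show max (max (-v.2) (-w.2)) 0 ≤ -H.d i
        rw [max_eq_left h0.le, hm]
        exact neg_le_neg (le_of_eq hi2.symm)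
      · obtain ⟨i, hi1, hi2⟩ := mem_verts_bot hw (neg_pos.mp (hm ▸ h0))
        refine ⟨i, by rw [he]; exact hi1, ?_⟩
        show max (max (-v.2) (-w.2)) 0 ≤ -H.d i
        rw [max_eq_left h0.le, hm]
        exact neg_le_neg (le_of_eq hi2.symm)

end DoubleHistogram
/-- In a double histogram, if `t ∈ I(s) \ N(s)` then `nd(s,t)` and
`fd(s,t)` are co-visible. -/
theorem nd_sees_fd
    (H : DoubleHistogram) (s t : ↥H.verts)
    (htI : (t : ℝ × ℝ) ∈ H.Iv (s : ℝ × ℝ))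
    (htN : (t : ℝ × ℝ) ∉ H.Nbr (s : ℝ × ℝ)) :
    H.covisible (H.nd (s : ℝ × ℝ) (t : ℝ × ℝ)) (H.fd (s : ℝ × ℝ) (t : ℝ × ℝ)) := by
  open DoubleHistogram in
  obtain ⟨htV, hl, hr⟩ := htI
  have hsV : (s : ℝ × ℝ) ∈ H.verts := s.2
  set sv : ℝ × ℝ := (s : ℝ × ℝ) with hsv
  set tv : ℝ × ℝ := (t : ℝ × ℝ) with htv
  have hsreg : sv ∈ H.region := verts_subset_region hsV
  rcases lt_trichotomy sv.1 tv.1 with hst | heq | hts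
  · -- s left of t
    rw [fd, if_pos hst]
    by_cases hEx : ∃ w ∈ H.Nbr sv, tv.1 ≤ w.1
    · rw [if_pos hEx]
      set A := {x | (∃ y, (x, y) ∈ H.Nbr sv) ∧ tv.1 ≤ x} with hA
      have hAf : A.Finite := by
        apply ((Nbr_finite (H := H) sv).image Prod.fst).subset
        rintro x ⟨⟨y, hy⟩, -⟩
        exact ⟨(x, y), hy, rfl⟩
      have hAne : A.Nonempty := by
        obtain ⟨w, hwN, hwt⟩ := hEx
        exact ⟨w.1, ⟨⟨w.2, by rw [Prod.mk.eta]; exact hwN⟩, hwt⟩⟩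
      set fx := sInf A with hfx
      have hfxA : fx ∈ A := hAne.csInf_mem hAf
      have hfxLB : ∀ x ∈ A, fx ≤ x := fun x hx => csInf_le hAf.bddBelow hx
      have htfx : tv.1 ≤ fx := hfxA.2
      set Y := {y | ((fx, y) : ℝ × ℝ) ∈ H.Nbr sv} with hY
      have hYf : Y.Finite := by
        apply ((Nbr_finite (H := H) sv).image Prod.snd).subset
        intro y hy
        exact ⟨(fx, y), hy, rfl⟩
      have hYne : Y.Nonempty := by
        obtain ⟨⟨y, hy⟩, -⟩ := hfxA
        exact ⟨y, hy⟩
      obtain ⟨hfyY, -⟩ := closestToBase_spec hYf hYne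
      set fy := closestToBase Y with hfy
      have hfN : ((fx, fy) : ℝ × ℝ) ∈ H.Nbr sv := hfyY
      have hfV : ((fx, fy) : ℝ × ℝ) ∈ H.verts := Nbr_subset_verts hfN
      have hfb : fx ≤ H.xs (Fin.last H.m) := (verts_x_range hfV).2
      have hfns : ((fx, fy) : ℝ × ℝ) ≠ sv := by
        intro he
        have := congrArg Prod.fst he
        simp only at this
        rw [this] at htfx
        exact absurd hst (not_lt.mpr htfx)
      have hsf : H.covisible sv (fx, fy) := covisible_of_mem_Nbr hfN hfns
      have hsfx : sv.1 ≤ fx := le_trans hst.le htfx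
      have hSB := (covisible_iff (H := H)).mp hsf
      refine main_dir_L hsV hst htfx hfb ?_ ?_ ?_
      · intro x hx
        exact (hSB x (by rw [min_eq_left hsfx, max_eq_right hsfx]; exact hx)).1
      · intro x hx
        exact (hSB x (by rw [min_eq_left hsfx, max_eq_right hsfx]; exact hx)).2
      · exact fun w hw h => hfxLB w.1 ⟨⟨w.2, by rw [Prod.mk.eta]; exact hw⟩, h⟩
    · rw [if_neg hEx]
      push_neg at hEx
      have htr : tv.1 ≤ H.rhit sv := by rw [← rpt_fst]; exact hr
      have hrle : H.rhit sv ≤ H.xs (Fin.last H.m) := (rhit_spec hsreg).2.1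
      have hrx : H.rhit sv = H.xs (Fin.last H.m) := by
        by_contra hne
        obtain ⟨w, hwN, hwx⟩ := blocker_right hsV (lt_of_le_of_ne hrle hne)
        exact absurd (hEx w hwN) (not_lt.mpr (by rw [hwx]; exact htr))
      rw [rpt, if_pos hrx]
      have hseg := (rhit_spec hsreg).2.2
      refine main_dir_L hsV hst (by rw [← hrx]; exact htr) (le_refl _) ?_ ?_ ?_
      · intro x hx
        have hx' : x ∈ Icc sv.1 (H.rhit sv) := by rw [hrx]; exact hx
        refine VProf.cond_le ?_ (mem_region_iff.mp (hseg x hx')).1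
        show max (max sv.2 sv.2) 0 ≤ max sv.2 0
        rw [max_self]
      · intro x hx
        have hx' : x ∈ Icc sv.1 (H.rhit sv) := by rw [hrx]; exact hx
        refine VProf.cond_le ?_ (mem_region_iff.mp (hseg x hx')).2
        show max (max (-sv.2) (-sv.2)) 0 ≤ max (-sv.2) 0
        rw [max_self]
      · exact fun w hw h => absurd h (not_le.mpr (hEx w hw))
  · -- same x-coordinate: t is a neighbour of s
    exact absurd ⟨t.2, Or.inr (sameX hsV t.2 heq)⟩ htN
  · -- t left of s
    rw [fd, if_neg (not_lt.mpr hts.le)]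
    by_cases hEx : ∃ w ∈ H.Nbr sv, w.1 ≤ tv.1
    · rw [if_pos hEx]
      set A := {x | (∃ y, (x, y) ∈ H.Nbr sv) ∧ x ≤ tv.1} with hA
      have hAf : A.Finite := by
        apply ((Nbr_finite (H := H) sv).image Prod.fst).subset
        rintro x ⟨⟨y, hy⟩, -⟩
        exact ⟨(x, y), hy, rfl⟩
      have hAne : A.Nonempty := by
        obtain ⟨w, hwN, hwt⟩ := hEx
        exact ⟨w.1, ⟨⟨w.2, by rw [Prod.mk.eta]; exact hwN⟩, hwt⟩⟩
      set fx := sSup A with hfx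
      have hfxA : fx ∈ A := hAne.csSup_mem hAf
      have hfxUB : ∀ x ∈ A, x ≤ fx := fun x hx => le_csSup hAf.bddAbove hx
      have htfx : fx ≤ tv.1 := hfxA.2
      set Y := {y | ((fx, y) : ℝ × ℝ) ∈ H.Nbr sv} with hY
      have hYf : Y.Finite := by
        apply ((Nbr_finite (H := H) sv).image Prod.snd).subset
        intro y hy
        exact ⟨(fx, y), hy, rfl⟩
      have hYne : Y.Nonempty := by
        obtain ⟨⟨y, hy⟩, -⟩ := hfxA
        exact ⟨y, hy⟩
      obtain ⟨hfyY, -⟩ := closestToBase_spec hYf hYne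
      set fy := closestToBase Y with hfy
      have hfN : ((fx, fy) : ℝ × ℝ) ∈ H.Nbr sv := hfyY
      have hfV : ((fx, fy) : ℝ × ℝ) ∈ H.verts := Nbr_subset_verts hfN
      have hfb : H.xs 0 ≤ fx := (verts_x_range hfV).1
      have hfns : ((fx, fy) : ℝ × ℝ) ≠ sv := by
        intro he
        have := congrArg Prod.fst he
        simp only at this
        rw [this] at htfx
        exact absurd hts (not_lt.mpr htfx)
      have hsf : H.covisible sv (fx, fy) := covisible_of_mem_Nbr hfN hfns
      have hsfx : fx ≤ sv.1 := le_trans htfx hts.le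
      have hSB := (covisible_iff (H := H)).mp hsf
      refine main_dir_R hsV hts htfx hfb ?_ ?_ ?_
      · intro x hx
        exact (hSB x (by rw [min_eq_right hsfx, max_eq_left hsfx]; exact hx)).1
      · intro x hx
        exact (hSB x (by rw [min_eq_right hsfx, max_eq_left hsfx]; exact hx)).2
      · exact fun w hw h => hfxUB w.1 ⟨⟨w.2, by rw [Prod.mk.eta]; exact hw⟩, h⟩
    · rw [if_neg hEx]
      push_neg at hEx
      have htr : H.lhit sv ≤ tv.1 := by rw [← lpt_fst]; exact hl
      have hrle : H.xs 0 ≤ H.lhit sv := (lhit_spec hsreg).2.1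
      have hrx : H.lhit sv = H.xs 0 := by
        by_contra hne
        obtain ⟨w, hwN, hwx⟩ := blocker_left hsV (lt_of_le_of_ne hrle (Ne.symm hne))
        exact absurd (hEx w hwN) (not_lt.mpr (by rw [hwx]; exact htr))
      rw [lpt, if_pos hrx]
      have hseg := (lhit_spec hsreg).2.2
      refine main_dir_R hsV hts (by rw [← hrx]; exact htr) (le_refl _) ?_ ?_ ?_
      · intro x hx
        have hx' : x ∈ Icc (H.lhit sv) sv.1 := by rw [hrx]; exact hx
        refine VProf.cond_le ?_ (mem_region_iff.mp (hseg x hx')).1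
        show max (max sv.2 sv.2) 0 ≤ max sv.2 0
        rw [max_self]
      · intro x hx
        have hx' : x ∈ Icc (H.lhit sv) sv.1 := by rw [hrx]; exact hx
        refine VProf.cond_le ?_ (mem_region_iff.mp (hseg x hx')).2
        show max (max (-sv.2) (-sv.2)) 0 ≤ max (-sv.2) 0
        rw [max_self]
      · exact fun w hw h => absurd h (not_le.mpr (hEx w hw))
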